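/- arXiv:1612.06255 — 9 statements merged into one kernel-verified Lean document; each statement's English description precedes it below -/
import Mathlib

section
/- Let A be a real m×n matrix, X_k a real n×m matrix, S a real m×τ matrix, and let M := Sᵀ Aᵀ A Aᵀ A S with Moore–Penrose pseudoinverse M⁺. Define X_{k+1} := X_k − Aᵀ A S M⁺ Sᵀ Aᵀ (A X_k − I). Then X_{k+1} solves the sketched projection problem min ½‖X − X_k‖_F² subject to Sᵀ Aᵀ = Sᵀ Aᵀ A X; that is, Sᵀ Aᵀ A X_{k+1} = Sᵀ Aᵀ, and every real n×m matrix X with Sᵀ Aᵀ A X = Sᵀ Aᵀ satisfies ‖X_{k+1} − X_k‖_F ≤ ‖X − X_k‖_F. -/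
/-!
Write `C := Sᵀ Aᵀ A` and `D := Sᵀ Aᵀ`. Then `M = C Cᵀ` and the update reads
`X_{k+1} = X_k − Cᵀ M⁺ (C X_k − D)`. Over the reals `B (C Cᵀ) = 0` forces `B C = 0`, so
`M M⁺ M = M` makes `M M⁺` fix `C`, and, as `D Dᵀ = C S`, also `D`; this gives
`C X_{k+1} = D`. The step `X_{k+1} − X_k` lies in the row space of `C`, hence is orthogonal
to `X − X_{k+1}` for every feasible `X`, and Pythagoras gives the minimality.
-/

open Matrix

noncomputable def frobNorm {m n : ℕ} (X : Matrix (Fin m) (Fin n) ℝ) : ℝ :=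
  Real.sqrt ((Xᵀ * X).trace)

namespace Matrix

variable {p q r : Type*} [Fintype p] [Fintype q]

theorem mul_eq_self_of_mul_mul_transpose_eq_self {P : Matrix p p ℝ} {C : Matrix p q ℝ}
    (h : P * (C * Cᵀ) = C * Cᵀ) : P * C = C := by
  classical
  have h0 : (P - 1) * (C * Cᵀ) = 0 := by rw [Matrix.sub_mul, Matrix.one_mul, h, sub_self]
  have h1 := (mul_self_mul_conjTranspose_eq_zero C (P - 1)).mp (by simpa using h0)
  rwa [Matrix.sub_mul, Matrix.one_mul, sub_eq_zero] at h1

theorem mul_sub_transpose_mul_mul_sub_eq {C : Matrix p q ℝ}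
    {D : Matrix p r ℝ} {Mp : Matrix p p ℝ} (hC : C * Cᵀ * Mp * C = C)
    (hD : C * Cᵀ * Mp * D = D) (X : Matrix q r ℝ) :
    C * (X - Cᵀ * Mp * (C * X - D)) = D := by
  have hP : C * (Cᵀ * Mp * (C * X - D)) = C * Cᵀ * Mp * (C * X - D) := by
    simp only [Matrix.mul_assoc]
  rw [Matrix.mul_sub, hP, Matrix.mul_sub, ← Matrix.mul_assoc, hC, hD, sub_sub_cancel]

theorem trace_transpose_mul_self_add [Fintype r] {U V : Matrix q r ℝ} (h : Uᵀ * V = 0) :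
    ((U + V)ᵀ * (U + V)).trace = (Uᵀ * U).trace + (Vᵀ * V).trace := by
  have h' : (Vᵀ * U).trace = 0 := by
    rw [← trace_transpose, transpose_mul, transpose_transpose, h, trace_zero]
  simp only [transpose_add, Matrix.add_mul, Matrix.mul_add, trace_add, h, h', trace_zero]
  ring

theorem trace_transpose_mul_self_nonneg [Fintype r] (U : Matrix q r ℝ) : 0 ≤ (Uᵀ * U).trace := by
  simpa using (posSemidef_conjTranspose_mul_self U).trace_nonneg

theorem trace_transpose_mul_self_sub_le [Fintype r] {C : Matrix p q ℝ} {X₀ X₁ X : Matrix q r ℝ}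
    (W : Matrix p r ℝ) (hW : X₁ - X₀ = Cᵀ * W) (hX : C * X = C * X₁) :
    ((X₁ - X₀)ᵀ * (X₁ - X₀)).trace ≤ ((X - X₀)ᵀ * (X - X₀)).trace := by
  have horth : (X₁ - X₀)ᵀ * (X - X₁) = 0 := by
    rw [hW, transpose_mul, transpose_transpose, Matrix.mul_assoc, Matrix.mul_sub, hX,
      sub_self, Matrix.mul_zero]
  have hsplit : X - X₀ = (X₁ - X₀) + (X - X₁) := by abel
  rw [hsplit, trace_transpose_mul_self_add horth]
  linarith [trace_transpose_mul_self_nonneg (X - X₁)]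

end Matrix

theorem satax_update_is_projection_general (m n τ : ℕ)
    (A : Matrix (Fin m) (Fin n) ℝ) (Xk : Matrix (Fin n) (Fin m) ℝ)
    (S : Matrix (Fin n) (Fin τ) ℝ)
    (M Mp : Matrix (Fin τ) (Fin τ) ℝ)
    (hM : M = Sᵀ * Aᵀ * A * Aᵀ * A * S)
    (hMp1 : M * Mp * M = M)
    (X1 : Matrix (Fin n) (Fin m) ℝ)
    (hX1 : X1 = Xk - Aᵀ * A * S * Mp * Sᵀ * Aᵀ * (A * Xk - 1)) :
    Sᵀ * Aᵀ * A * X1 = Sᵀ * Aᵀ ∧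
    ∀ X : Matrix (Fin n) (Fin m) ℝ, Sᵀ * Aᵀ * A * X = Sᵀ * Aᵀ →
      frobNorm (X1 - Xk) ≤ frobNorm (X - Xk) := by
  set C := Sᵀ * Aᵀ * A
  set D := Sᵀ * Aᵀ
  have hMC : M = C * Cᵀ := by simp [hM, C, transpose_mul, Matrix.mul_assoc]
  have hX1C : X1 = Xk - Cᵀ * Mp * (C * Xk - D) := by
    simp [hX1, C, D, transpose_mul, Matrix.mul_assoc, Matrix.mul_sub]
  rw [hMC] at hMp1
  have hPC : C * Cᵀ * Mp * C = C := mul_eq_self_of_mul_mul_transpose_eq_self hMp1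
  have hDD : D * Dᵀ = C * S := by simp [C, D, transpose_mul, Matrix.mul_assoc]
  have hPD : C * Cᵀ * Mp * D = D :=
    mul_eq_self_of_mul_mul_transpose_eq_self (by rw [hDD, ← Matrix.mul_assoc, hPC])
  have hfeas : C * X1 = D := hX1C ▸ mul_sub_transpose_mul_mul_sub_eq hPC hPD Xk
  refine ⟨hfeas, fun X hX => Real.sqrt_le_sqrt ?_⟩
  refine trace_transpose_mul_self_sub_le (-(Mp * (C * Xk - D))) ?_ (hX.trans hfeas.symm)
  rw [hX1C, sub_sub_cancel_left, Matrix.mul_neg, Matrix.mul_assoc]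

/-- The SATAX update `X_{k+1} = X_k − AᵀA S M⁺ Sᵀ Aᵀ (A X_k − I)`, with
`M := Sᵀ Aᵀ A Aᵀ A S`, is the projection of `X_k` onto the sketched constraint
`Sᵀ Aᵀ = Sᵀ Aᵀ A X`: it is feasible, and is the closest feasible point to
`X_k` in Frobenius norm. -/
theorem satax_update_is_projection (m n τ : ℕ)
    (A : Matrix (Fin m) (Fin n) ℝ) (Xk : Matrix (Fin n) (Fin m) ℝ)
    (S : Matrix (Fin n) (Fin τ) ℝ)
    (M Mp : Matrix (Fin τ) (Fin τ) ℝ)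
    (hM : M = Sᵀ * Aᵀ * A * Aᵀ * A * S)
    (hMp1 : M * Mp * M = M) (hMp2 : Mp * M * Mp = Mp)
    (hMp3 : (M * Mp)ᵀ = M * Mp) (hMp4 : (Mp * M)ᵀ = Mp * M)
    (X1 : Matrix (Fin n) (Fin m) ℝ)
    (hX1 : X1 = Xk - Aᵀ * A * S * Mp * Sᵀ * Aᵀ * (A * Xk - 1)) :
    Sᵀ * Aᵀ * A * X1 = Sᵀ * Aᵀ ∧
    ∀ X : Matrix (Fin n) (Fin m) ℝ, Sᵀ * Aᵀ * A * X = Sᵀ * Aᵀ →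
      frobNorm (X1 - Xk) ≤ frobNorm (X - Xk) :=
  satax_update_is_projection_general m n τ A Xk S M Mp hM hMp1 X1 hX1
end

section
/- Let A be a real m×n matrix with Moore–Penrose pseudoinverse A⁺, S a real m×τ matrix, and M⁺ the Moore–Penrose pseudoinverse of M := Sᵀ Aᵀ A Aᵀ A S. Suppose X_k = Aᵀ A W for some real n×m matrix W, and define X_{k+1} := X_k − Aᵀ A S M⁺ Sᵀ Aᵀ (A X_k − I). Then there exists a real n×m matrix W' such that X_{k+1} − A⁺ = Aᵀ A W'; i.e., the range-space invariance Range(X_{k+1} − A⁺) ⊆ Range(Aᵀ A) is preserved by the SATAX update. -/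
/-!
The correction term of the update is `AᵀA` times something, so everything hinges on
`A⁺` itself lying in the range of `AᵀA`. Two Penrose equations give
`A⁺ = (A⁺A)ᵀ A⁺ = Aᵀ A⁺ᵀ A⁺` and `A⁺ᵀ = (A A⁺)ᵀ A⁺ᵀ = A A⁺ A⁺ᵀ`, hence `A⁺ = AᵀA (A⁺ A⁺ᵀ A⁺)`.
-/

open Matrix

section PenroseEquations

variable {R l m : Type*} [CommRing R] [Fintype l] [Fintype m]
  {A : Matrix l m R} {Ap : Matrix m l R}

theorem eq_transpose_mul_transpose_mul_of_penrose (h2 : Ap * A * Ap = Ap)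
    (h4 : (Ap * A)ᵀ = Ap * A) : Ap = Aᵀ * Apᵀ * Ap :=
  calc Ap = Ap * A * Ap := h2.symm
    _ = (Ap * A)ᵀ * Ap := by rw [h4]
    _ = Aᵀ * Apᵀ * Ap := by rw [transpose_mul]

theorem transpose_eq_mul_mul_transpose_of_penrose (h2 : Ap * A * Ap = Ap)
    (h3 : (A * Ap)ᵀ = A * Ap) : Apᵀ = A * Ap * Apᵀ :=
  calc Apᵀ = (Ap * A * Ap)ᵀ := by rw [h2]
    _ = (A * Ap)ᵀ * Apᵀ := by rw [Matrix.mul_assoc, transpose_mul, transpose_mul]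
    _ = A * Ap * Apᵀ := by rw [h3]

theorem eq_transpose_mul_self_mul_of_penrose (h2 : Ap * A * Ap = Ap)
    (h3 : (A * Ap)ᵀ = A * Ap) (h4 : (Ap * A)ᵀ = Ap * A) :
    Ap = Aᵀ * A * (Ap * Apᵀ * Ap) := by
  conv_lhs =>
    rw [eq_transpose_mul_transpose_mul_of_penrose h2 h4,
      transpose_eq_mul_mul_transpose_of_penrose h2 h3]
  simp only [Matrix.mul_assoc]

end PenroseEquations

theorem satax_range_invariance_general (m n τ : ℕ)
    (A : Matrix (Fin m) (Fin n) ℝ) (Ap : Matrix (Fin n) (Fin m) ℝ)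
    (hp2 : Ap * A * Ap = Ap)
    (hp3 : (A * Ap)ᵀ = A * Ap) (hp4 : (Ap * A)ᵀ = Ap * A)
    (S : Matrix (Fin n) (Fin τ) ℝ)
    (Mp : Matrix (Fin τ) (Fin τ) ℝ)
    (Xk W : Matrix (Fin n) (Fin m) ℝ) (hXk : Xk = Aᵀ * A * W)
    (X1 : Matrix (Fin n) (Fin m) ℝ)
    (hX1 : X1 = Xk - Aᵀ * A * S * Mp * Sᵀ * Aᵀ * (A * Xk - 1)) :
    ∃ W' : Matrix (Fin n) (Fin m) ℝ, X1 - Ap = Aᵀ * A * W' := by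
  subst hX1 hXk
  refine ⟨W - S * Mp * Sᵀ * Aᵀ * (A * (Aᵀ * A * W) - 1) - Ap * Apᵀ * Ap, ?_⟩
  conv_lhs => rw [eq_transpose_mul_self_mul_of_penrose hp2 hp3 hp4]
  simp only [Matrix.mul_assoc, Matrix.mul_sub]

/-- Range-space invariance of the SATAX update: if `X_k = AᵀA W` then
`X_{k+1} − A⁺ = AᵀA W'` for some `W'`. -/
theorem satax_range_invariance (m n τ : ℕ)
    (A : Matrix (Fin m) (Fin n) ℝ) (Ap : Matrix (Fin n) (Fin m) ℝ)
    (hp1 : A * Ap * A = A) (hp2 : Ap * A * Ap = Ap)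
    (hp3 : (A * Ap)ᵀ = A * Ap) (hp4 : (Ap * A)ᵀ = Ap * A)
    (S : Matrix (Fin n) (Fin τ) ℝ)
    (M Mp : Matrix (Fin τ) (Fin τ) ℝ)
    (hM : M = Sᵀ * Aᵀ * A * Aᵀ * A * S)
    (hMp1 : M * Mp * M = M) (hMp2 : Mp * M * Mp = Mp)
    (hMp3 : (M * Mp)ᵀ = M * Mp) (hMp4 : (Mp * M)ᵀ = Mp * M)
    (Xk W : Matrix (Fin n) (Fin m) ℝ) (hXk : Xk = Aᵀ * A * W)
    (X1 : Matrix (Fin n) (Fin m) ℝ)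
    (hX1 : X1 = Xk - Aᵀ * A * S * Mp * Sᵀ * Aᵀ * (A * Xk - 1)) :
    ∃ W' : Matrix (Fin n) (Fin m) ℝ, X1 - Ap = Aᵀ * A * W' :=
  satax_range_invariance_general m n τ A Ap hp2 hp3 hp4 S Mp Xk W hXk X1 hX1
end

section
/- Let A be a real m×n matrix with Moore–Penrose pseudoinverse A⁺. Let S_1,…,S_r be real m×τ matrices, and p_1,…,p_r > 0 with Σᵢ pᵢ = 1. For each i, let Mᵢ⁺ be the Moore–Penrose pseudoinverse of Mᵢ := Sᵢᵀ Aᵀ A Aᵀ A Sᵢ, set Hᵢ := Sᵢ Mᵢ⁺ Sᵢᵀ and Zᵢ := Aᵀ A Hᵢ Aᵀ A. Suppose H := Σᵢ pᵢ Hᵢ is positive definite, and let μ > 0 be such that every nonzero eigenvalue of the symmetric matrix Aᵀ A H Aᵀ A is at least μ. Then for every real n×m matrix X of the form X − A⁺ = Aᵀ A W for some W, writing R := X − A⁺, one has Σᵢ pᵢ ‖(I − Zᵢ) R‖_F² ≤ (1 − μ) ‖R‖_F². (This is the one-step L2 contraction of the SATAX method with rate ρ = 1 − λ⁺_min(Aᵀ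 A E[H_S] Aᵀ A).) -/
open Matrix

/-! Each `Zᵢ = (AᵀA Sᵢ) Mᵢ⁺ (AᵀA Sᵢ)ᵀ` is the orthogonal projector onto the column space of
`AᵀA Sᵢ`, so `‖(I - Zᵢ) R‖² = ‖R‖² - tr (Rᵀ Zᵢ R)`, and averaging over `i` gives
`‖R‖² - tr (Rᵀ Z̄ R)` with `Z̄ = AᵀA H AᵀA`. As `H` is positive definite, `Z̄` has the same kernel
as `AᵀA`, so every column of `R = AᵀA W` is orthogonal to `ker Z̄`; expanding it in an eigenbasis
of `Z̄`, only eigenvalues `≥ μ` contribute, whence `tr (Rᵀ Z̄ R) ≥ μ ‖R‖²`. -/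

section Penrose
variable {m n t α : Type*} [Fintype m] [Fintype n] [Fintype t] [CommSemiring α]

def Matrix.IsPenroseInverse (M : Matrix m n α) (B : Matrix n m α) : Prop :=
  M * B * M = M ∧ B * M * B = B ∧ (M * B)ᵀ = M * B ∧ (B * M)ᵀ = B * M

namespace Matrix.IsPenroseInverse
variable {M : Matrix m n α} {B C : Matrix n m α}

theorem transpose (hB : IsPenroseInverse M B) : IsPenroseInverse Mᵀ Bᵀ := by
  obtain ⟨h1, h2, h3, h4⟩ := hB
  refine ⟨?_, ?_, ?_, ?_⟩
  · rw [← transpose_mul, ← transpose_mul, ← Matrix.mul_assoc, h1]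
  · rw [← transpose_mul, ← transpose_mul, ← Matrix.mul_assoc, h2]
  · rw [← transpose_mul, h4, h4]
  · rw [← transpose_mul, h3, h3]

theorem unique (hB : IsPenroseInverse M B) (hC : IsPenroseInverse M C) : B = C := by
  obtain ⟨hB1, hB2, hB3, hB4⟩ := hB
  obtain ⟨hC1, hC2, hC3, hC4⟩ := hC
  have hMB : M * B = M * C := by
    calc M * B = (M * C * M) * B := by rw [hC1]
    _ = (M * C)ᵀ * (M * B)ᵀ := by rw [hC3, hB3]; simp only [Matrix.mul_assoc]
    _ = Cᵀ * (M * B * M)ᵀ := by simp only [transpose_mul, Matrix.mul_assoc]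
    _ = M * C := by rw [hB1, ← transpose_mul, hC3]
  have hBM : B * M = C * M := by
    calc B * M = B * (M * C * M) := by rw [hC1]
    _ = (B * M)ᵀ * (C * M)ᵀ := by rw [hB4, hC4]; simp only [Matrix.mul_assoc]
    _ = (M * B * M)ᵀ * Cᵀ := by simp only [transpose_mul, Matrix.mul_assoc]
    _ = C * M := by rw [hB1, ← transpose_mul, hC4]
  calc B = B * M * B := hB2.symm
  _ = C * M * C := by rw [hBM, Matrix.mul_assoc, hMB, Matrix.mul_assoc]
  _ = C := hC2

theorem transpose_eq_self {M : Matrix n n α} {B : Matrix n n α} (hB : IsPenroseInverse M B)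
    (hM : Mᵀ = M) : Bᵀ = B :=
  (hM ▸ hB.transpose).unique hB

theorem isIdempotentElem_mul_mul_transpose {K : Matrix n t α} {B : Matrix t t α}
    (hB : IsPenroseInverse (Kᵀ * K) B) : IsIdempotentElem (K * B * Kᵀ) := by
  unfold IsIdempotentElem
  calc K * B * Kᵀ * (K * B * Kᵀ) = K * (B * (Kᵀ * K) * B) * Kᵀ := by simp only [Matrix.mul_assoc]
  _ = K * B * Kᵀ := by rw [hB.2.1]

theorem transpose_mul_mul_transpose {K : Matrix n t α} {B : Matrix t t α}
    (hB : IsPenroseInverse (Kᵀ * K) B) : (K * B * Kᵀ)ᵀ = K * B * Kᵀ := by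
  rw [transpose_mul, transpose_mul, transpose_transpose,
    hB.transpose_eq_self (by rw [transpose_mul, transpose_transpose]), Matrix.mul_assoc]

end Matrix.IsPenroseInverse
end Penrose

section Spectral
variable {E : Type*} [NormedAddCommGroup E] [InnerProductSpace ℝ E] [FiniteDimensional ℝ E]

theorem LinearMap.IsSymmetric.mul_norm_sq_le_inner_of_mem_orthogonal_ker {T : E →ₗ[ℝ] E}
    (hT : T.IsSymmetric) {μ : ℝ} (hμ : ∀ c, Module.End.HasEigenvalue T c → c ≠ 0 → μ ≤ c)
    {v : E} (hv : v ∈ (LinearMap.ker T)ᗮ) : μ * ‖v‖ ^ 2 ≤ inner ℝ (T v) v := by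
  set b := hT.eigenvectorBasis rfl
  have hTv : inner ℝ (T v) v = ∑ i, hT.eigenvalues rfl i * b.repr v i ^ 2 := by
    rw [← b.repr.inner_map_map, PiLp.inner_apply]
    refine Finset.sum_congr rfl fun i _ => ?_
    rw [hT.eigenvectorBasis_apply_self_apply]
    simp only [Real.ringHom_apply, RCLike.inner_apply, sq]
    ring
  have hv2 : ‖v‖ ^ 2 = ∑ i, b.repr v i ^ 2 := by
    rw [← b.repr.norm_map, EuclideanSpace.norm_sq_eq]
    simp
  rw [hTv, hv2, Finset.mul_sum]
  refine Finset.sum_le_sum fun i _ => ?_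
  by_cases h0 : hT.eigenvalues rfl i = 0
  · have hbi : b i ∈ LinearMap.ker T := by
      simp [b, h0]
    have : b.repr v i = 0 := by
      rw [b.repr_apply_apply]
      exact (Submodule.mem_orthogonal _ _).1 hv _ hbi
    simp [this, h0]
  · exact mul_le_mul_of_nonneg_right (hμ _ (hT.hasEigenvalue_eigenvalues rfl i) h0) (sq_nonneg _)

end Spectral

theorem Matrix.IsHermitian.mul_dotProduct_self_le {n : Type*} [Fintype n] [DecidableEq n]
    {Z : Matrix n n ℝ} (hZ : Z.IsHermitian) {μ : ℝ}
    (hμ : ∀ (c : ℝ) (v : n → ℝ), v ≠ 0 → Z *ᵥ v = c • v → c ≠ 0 → μ ≤ c)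
    {v : n → ℝ} (hv : ∀ u, Z *ᵥ u = 0 → u ⬝ᵥ v = 0) : μ * (v ⬝ᵥ v) ≤ v ⬝ᵥ (Z *ᵥ v) := by
  have key := (isSymmetric_toEuclideanLin_iff.mpr hZ).mul_norm_sq_le_inner_of_mem_orthogonal_ker
    (μ := μ) ?_ (v := WithLp.toLp 2 v) ?_
  · rwa [← real_inner_self_eq_norm_sq, EuclideanSpace.inner_eq_star_dotProduct,
      EuclideanSpace.inner_eq_star_dotProduct, toLpLin_apply] at key
  · intro c hc hc0
    obtain ⟨x, hx⟩ := hc.exists_hasEigenvector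
    refine hμ c x.ofLp ?_ ?_ hc0
    · simpa using hx.2
    · simpa using congrArg WithLp.ofLp (Module.End.mem_eigenspace_iff.1 hx.1)
  · rw [Submodule.mem_orthogonal]
    intro u hu
    simpa [EuclideanSpace.inner_eq_star_dotProduct, dotProduct_comm] using
      hv u.ofLp (congrArg WithLp.ofLp hu)

section Trace
variable {m n : Type*} [Fintype m] [Fintype n]

theorem Matrix.trace_transpose_mul_mul_eq_sum {α : Type*} [CommSemiring α]
    (R : Matrix n m α) (B : Matrix n n α) :
    (Rᵀ * B * R).trace = ∑ k, Rᵀ k ⬝ᵥ (B *ᵥ Rᵀ k) := by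
  simp only [trace, diag, Matrix.mul_apply, transpose_apply, dotProduct, mulVec,
    Finset.sum_mul, Finset.mul_sum]
  refine Finset.sum_congr rfl fun k _ => ?_
  rw [Finset.sum_comm]
  exact Finset.sum_congr rfl fun a _ => Finset.sum_congr rfl fun b _ => by ring

theorem Matrix.trace_transpose_mul_self_one_sub_mul {α : Type*} [CommRing α] [DecidableEq n]
    {P : Matrix n n α} (hPt : Pᵀ = P) (hP : IsIdempotentElem P) (R : Matrix n m α) :
    (((1 - P) * R)ᵀ * ((1 - P) * R)).trace = (Rᵀ * R).trace - (Rᵀ * P * R).trace := by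
  have hQ : (1 - P)ᵀ * (1 - P) = 1 - P := by
    rw [transpose_sub, transpose_one, hPt]
    exact hP.one_sub.eq
  rw [transpose_mul, Matrix.mul_assoc, ← Matrix.mul_assoc (1 - P)ᵀ, hQ, Matrix.sub_mul,
    Matrix.mul_sub, trace_sub, Matrix.one_mul, Matrix.mul_assoc]

variable {G Hb : Matrix n n ℝ}

theorem Matrix.PosDef.mulVec_eq_zero_of_mul_mul_mulVec_eq_zero (hG : Gᵀ = G) (hHb : Hb.PosDef)
    {u : n → ℝ} (hu : (G * Hb * G) *ᵥ u = 0) : G *ᵥ u = 0 := by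
  by_contra hne
  have hquad : star (G *ᵥ u) ⬝ᵥ (Hb *ᵥ (G *ᵥ u)) = u ⬝ᵥ ((G * Hb * G) *ᵥ u) := by
    rw [star_trivial, ← mulVec_mulVec, ← mulVec_mulVec, dotProduct_mulVec u G,
      ← mulVec_transpose, hG]
  have hpos := hHb.dotProduct_mulVec_pos hne
  rw [hquad, hu, dotProduct_zero] at hpos
  exact lt_irrefl _ hpos

theorem Matrix.PosDef.mul_trace_le_trace_mul_mul [DecidableEq n] (hG : Gᵀ = G) (hHb : Hb.PosDef)
    {μ : ℝ}
    (hμ : ∀ (c : ℝ) (v : n → ℝ), v ≠ 0 → (G * Hb * G) *ᵥ v = c • v → c ≠ 0 → μ ≤ c)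
    (W : Matrix n m ℝ) :
    μ * ((G * W)ᵀ * (G * W)).trace ≤ ((G * W)ᵀ * (G * Hb * G) * (G * W)).trace := by
  have hZ : (G * Hb * G).IsHermitian := by
    simpa [conjTranspose_eq_transpose_of_trivial, hG] using
      isHermitian_conjTranspose_mul_mul G hHb.isHermitian
  have hcol : ∀ k, (G * W)ᵀ k = G *ᵥ Wᵀ k := fun k => by
    ext j; simp [Matrix.mul_apply, mulVec, dotProduct]
  rw [← Matrix.mul_one (G * W)ᵀ, trace_transpose_mul_mul_eq_sum, Matrix.mul_one,
    trace_transpose_mul_mul_eq_sum, Finset.mul_sum]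
  refine Finset.sum_le_sum fun k _ => ?_
  rw [one_mulVec, hcol]
  refine hZ.mul_dotProduct_self_le hμ fun u hu => ?_
  rw [dotProduct_mulVec, ← mulVec_transpose, hG,
    hHb.mulVec_eq_zero_of_mul_mul_mulVec_eq_zero hG hu, zero_dotProduct]

end Trace

theorem frobNorm_sq {m n : ℕ} (X : Matrix (Fin m) (Fin n) ℝ) :
    frobNorm X ^ 2 = (Xᵀ * X).trace := by
  rw [frobNorm, Real.sq_sqrt]
  simpa only [conjTranspose_eq_transpose_of_trivial] using
    (posSemidef_conjTranspose_mul_self X).trace_nonneg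

theorem satax_one_step_contraction_general (m n τ r : ℕ)
    (A : Matrix (Fin m) (Fin n) ℝ) (Ap : Matrix (Fin n) (Fin m) ℝ)
    (S : Fin r → Matrix (Fin n) (Fin τ) ℝ)
    (p : Fin r → ℝ) (hpsum : ∑ i, p i = 1)
    (M Mp : Fin r → Matrix (Fin τ) (Fin τ) ℝ)
    (hM : ∀ i, M i = (S i)ᵀ * Aᵀ * A * Aᵀ * A * S i)
    (hMp1 : ∀ i, M i * Mp i * M i = M i) (hMp2 : ∀ i, Mp i * M i * Mp i = Mp i)
    (hMp3 : ∀ i, (M i * Mp i)ᵀ = M i * Mp i) (hMp4 : ∀ i, (Mp i * M i)ᵀ = Mp i * M i)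
    (H : Fin r → Matrix (Fin n) (Fin n) ℝ) (hH : ∀ i, H i = S i * Mp i * (S i)ᵀ)
    (Z : Fin r → Matrix (Fin n) (Fin n) ℝ) (hZ : ∀ i, Z i = Aᵀ * A * H i * Aᵀ * A)
    (Hbar : Matrix (Fin n) (Fin n) ℝ) (hHbar : Hbar = ∑ i, p i • H i)
    (hHpd : Hbar.PosDef)
    (μ : ℝ)
    (heig : ∀ (c : ℝ) (v : Fin n → ℝ), v ≠ 0 →
      (Aᵀ * A * Hbar * Aᵀ * A).mulVec v = c • v → c ≠ 0 → μ ≤ c) :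
    ∀ (X W : Matrix (Fin n) (Fin m) ℝ), X - Ap = Aᵀ * A * W →
      ∑ i, p i * (frobNorm ((1 - Z i) * (X - Ap))) ^ 2 ≤
        (1 - μ) * (frobNorm (X - Ap)) ^ 2 := by
  intro X W hXW
  set G := Aᵀ * A
  have hG : Gᵀ = G := by rw [transpose_mul, transpose_transpose]
  have hproj : ∀ i, (Z i)ᵀ = Z i ∧ IsIdempotentElem (Z i) := by
    intro i
    have hpinv : IsPenroseInverse ((G * S i)ᵀ * (G * S i)) (Mp i) := by
      have hMi : M i = (G * S i)ᵀ * (G * S i) := by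
        rw [hM i, transpose_mul, hG]; simp only [G, Matrix.mul_assoc]
      exact hMi ▸ ⟨hMp1 i, hMp2 i, hMp3 i, hMp4 i⟩
    have hZi : Z i = G * S i * Mp i * (G * S i)ᵀ := by
      rw [hZ i, hH i, transpose_mul, hG]; simp only [G, Matrix.mul_assoc]
    rw [hZi]
    exact ⟨hpinv.transpose_mul_mul_transpose, hpinv.isIdempotentElem_mul_mul_transpose⟩
  have hmean : G * Hbar * G = ∑ i, p i • Z i := by
    simp only [hHbar, hZ, Matrix.mul_sum, Matrix.sum_mul, Matrix.mul_smul, Matrix.smul_mul, G,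
      Matrix.mul_assoc]
  have hlow := hHpd.mul_trace_le_trace_mul_mul hG
    (by simpa only [G, Matrix.mul_assoc] using heig) W
  rw [hXW]
  simp only [frobNorm_sq, trace_transpose_mul_self_one_sub_mul (hproj _).1 (hproj _).2]
  calc ∑ i, p i * (((G * W)ᵀ * (G * W)).trace - ((G * W)ᵀ * Z i * (G * W)).trace)
      = ((G * W)ᵀ * (G * W)).trace - ((G * W)ᵀ * (G * Hbar * G) * (G * W)).trace := by
        simp only [mul_sub, Finset.sum_sub_distrib, ← Finset.sum_mul, hpsum, one_mul, hmean,
          Matrix.mul_sum, Matrix.sum_mul, trace_sum, Matrix.mul_smul, Matrix.smul_mul, trace_smul,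
          smul_eq_mul]
    _ ≤ (1 - μ) * ((G * W)ᵀ * (G * W)).trace := by linarith

/-- One-step L2 contraction of the SATAX method: for a discrete sketch
distribution `S_i` with probabilities `p_i`, `H_i := S_i M_i⁺ S_iᵀ`,
`Z_i := AᵀA H_i AᵀA`, `H := Σ_i p_i H_i` positive definite, and `μ > 0` a lower
bound on the nonzero eigenvalues of `AᵀA H AᵀA`, every `X` with
`X − A⁺ ∈ Range(AᵀA)` (residual `R := X − A⁺`) satisfies
`Σ_i p_i ‖(I − Z_i) R‖_F² ≤ (1 − μ) ‖R‖_F²`. -/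
theorem satax_one_step_contraction (m n τ r : ℕ)
    (A : Matrix (Fin m) (Fin n) ℝ) (Ap : Matrix (Fin n) (Fin m) ℝ)
    (hp1 : A * Ap * A = A) (hp2 : Ap * A * Ap = Ap)
    (hp3 : (A * Ap)ᵀ = A * Ap) (hp4 : (Ap * A)ᵀ = Ap * A)
    (S : Fin r → Matrix (Fin n) (Fin τ) ℝ)
    (p : Fin r → ℝ) (hppos : ∀ i, 0 < p i) (hpsum : ∑ i, p i = 1)
    (M Mp : Fin r → Matrix (Fin τ) (Fin τ) ℝ)
    (hM : ∀ i, M i = (S i)ᵀ * Aᵀ * A * Aᵀ * A * S i)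
    (hMp1 : ∀ i, M i * Mp i * M i = M i) (hMp2 : ∀ i, Mp i * M i * Mp i = Mp i)
    (hMp3 : ∀ i, (M i * Mp i)ᵀ = M i * Mp i) (hMp4 : ∀ i, (Mp i * M i)ᵀ = Mp i * M i)
    (H : Fin r → Matrix (Fin n) (Fin n) ℝ) (hH : ∀ i, H i = S i * Mp i * (S i)ᵀ)
    (Z : Fin r → Matrix (Fin n) (Fin n) ℝ) (hZ : ∀ i, Z i = Aᵀ * A * H i * Aᵀ * A)
    (Hbar : Matrix (Fin n) (Fin n) ℝ) (hHbar : Hbar = ∑ i, p i • H i)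
    (hHpd : Hbar.PosDef)
    (μ : ℝ) (hμ : 0 < μ)
    (heig : ∀ (c : ℝ) (v : Fin n → ℝ), v ≠ 0 →
      (Aᵀ * A * Hbar * Aᵀ * A).mulVec v = c • v → c ≠ 0 → μ ≤ c) :
    ∀ (X W : Matrix (Fin n) (Fin m) ℝ), X - Ap = Aᵀ * A * W →
      ∑ i, p i * (frobNorm ((1 - Z i) * (X - Ap))) ^ 2 ≤
        (1 - μ) * (frobNorm (X - Ap)) ^ 2 :=
  satax_one_step_contraction_general m n τ r A Ap S p hpsum M Mp hM hMp1 hMp2 hMp3 hMp4 H hH Z hZ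
    Hbar hHbar hHpd μ heig
end

section
/- Let A be a real m×n matrix with Moore–Penrose pseudoinverse A⁺, X_k a real n×m matrix, S a real m×τ matrix, and M⁺ the Moore–Penrose pseudoinverse of M := Sᵀ Aᵀ A Aᵀ A S. Then the SATAX update X_{k+1} := X_k − Aᵀ A S M⁺ Sᵀ Aᵀ (A X_k − I) is monotonic: ‖X_{k+1} − A⁺‖_F ≤ ‖X_k − A⁺‖_F. -/
open Matrix

/-! Put `C := AᵀAS` and `Q := C (CᵀC)⁺ Cᵀ`. Since `AᵀAA⁺ = Aᵀ`, the residual term is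
`Sᵀ Aᵀ (A Xₖ - I) = Cᵀ (Xₖ - A⁺)`, so `Xₖ₊₁ - A⁺ = (I - Q)(Xₖ - A⁺)`. By uniqueness of the
Moore–Penrose inverse, `(CᵀC)⁺` is symmetric, so `Q` is an orthogonal projector and `I - Q`
cannot increase the Frobenius norm. -/

namespace Matrix

variable {m n k R : Type*} [Fintype m] [Fintype n] [Fintype k] [CommRing R]

structure IsPenroseInverse_s10 (M : Matrix m n R) (X : Matrix n m R) : Prop where
  mul_inv_mul : M * X * M = M
  inv_mul_inv : X * M * X = X
  transpose_mul_inv : (M * X)ᵀ = M * X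
  transpose_inv_mul : (X * M)ᵀ = X * M

namespace IsPenroseInverse_s10

variable {M : Matrix m n R} {X Y : Matrix n m R}

theorem transpose_s10 (h : IsPenroseInverse_s10 M X) : IsPenroseInverse_s10 Mᵀ Xᵀ where
  mul_inv_mul := by rw [← transpose_mul, ← transpose_mul, ← Matrix.mul_assoc, h.mul_inv_mul]
  inv_mul_inv := by rw [← transpose_mul, ← transpose_mul, ← Matrix.mul_assoc, h.inv_mul_inv]
  transpose_mul_inv := by rw [← transpose_mul, transpose_transpose, h.transpose_inv_mul]
  transpose_inv_mul := by rw [← transpose_mul, transpose_transpose, h.transpose_mul_inv]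

theorem self_mul_eq (hX : IsPenroseInverse_s10 M X) (hY : IsPenroseInverse_s10 M Y) :
    M * X = M * Y :=
  calc M * X = M * Y * (M * X) := by rw [← Matrix.mul_assoc, hY.mul_inv_mul]
    _ = (M * X * (M * Y))ᵀ := by rw [transpose_mul, hX.transpose_mul_inv, hY.transpose_mul_inv]
    _ = M * Y := by rw [← Matrix.mul_assoc, hX.mul_inv_mul, hY.transpose_mul_inv]

theorem mul_self_eq (hX : IsPenroseInverse_s10 M X) (hY : IsPenroseInverse_s10 M Y) :
    X * M = Y * M :=
  calc X * M = X * M * (Y * M) := by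
        rw [Matrix.mul_assoc X M, ← Matrix.mul_assoc M Y M, hY.mul_inv_mul]
    _ = (Y * M * (X * M))ᵀ := by rw [transpose_mul, hX.transpose_inv_mul, hY.transpose_inv_mul]
    _ = Y * M := by
      rw [Matrix.mul_assoc Y M, ← Matrix.mul_assoc M X M, hX.mul_inv_mul, hY.transpose_inv_mul]

theorem unique_s10 (hX : IsPenroseInverse_s10 M X) (hY : IsPenroseInverse_s10 M Y) : X = Y :=
  calc X = X * M * X := hX.inv_mul_inv.symm
    _ = Y * M * Y := by
      rw [Matrix.mul_assoc, hX.self_mul_eq hY, ← Matrix.mul_assoc, hX.mul_self_eq hY]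
    _ = Y := hY.inv_mul_inv

theorem isSymm {M : Matrix n n R} {X : Matrix n n R} (hM : M.IsSymm)
    (hX : IsPenroseInverse_s10 M X) : X.IsSymm := by
  have hXt : IsPenroseInverse_s10 M Xᵀ := hM.eq ▸ hX.transpose_s10
  exact hXt.unique_s10 hX

theorem isSymm_mul_mul_transpose {C : Matrix n k R} {X : Matrix k k R}
    (hX : IsPenroseInverse_s10 (Cᵀ * C) X) : (C * X * Cᵀ).IsSymm := by
  have hXs : X.IsSymm :=
    hX.isSymm (show (Cᵀ * C)ᵀ = Cᵀ * C by rw [transpose_mul, transpose_transpose])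
  show (C * X * Cᵀ)ᵀ = C * X * Cᵀ
  rw [transpose_mul, transpose_mul, transpose_transpose, hXs.eq, Matrix.mul_assoc]

theorem isIdempotentElem_mul_mul_transpose_s10 {C : Matrix n k R} {X : Matrix k k R}
    (hX : IsPenroseInverse_s10 (Cᵀ * C) X) : IsIdempotentElem (C * X * Cᵀ) := by
  have h := congrArg (fun Y => C * Y * Cᵀ) hX.inv_mul_inv
  simpa only [IsIdempotentElem, Matrix.mul_assoc] using h

end IsPenroseInverse_s10

theorem transpose_mul_mul_eq_transpose {A : Matrix m n R} {Ap : Matrix n m R}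
    (h1 : A * Ap * A = A) (h3 : (A * Ap)ᵀ = A * Ap) : Aᵀ * (A * Ap) = Aᵀ := by
  conv_rhs => rw [← h1, transpose_mul, h3]

section Ordered

variable {m n k R : Type*} [Fintype m] [Fintype n] [Fintype k]
  [CommRing R] [LinearOrder R] [IsOrderedRing R]

theorem trace_transpose_mul_self_nonneg_s10 (E : Matrix m n R) : 0 ≤ (Eᵀ * E).trace :=
  Finset.sum_nonneg fun _ _ => Finset.sum_nonneg fun _ _ => mul_self_nonneg _

theorem trace_transpose_mul_self_sub_mul_le {Q : Matrix n n R} (hQ : Q.IsSymm)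
    (hQ' : IsIdempotentElem Q) (E : Matrix n k R) :
    ((E - Q * E)ᵀ * (E - Q * E)).trace ≤ (Eᵀ * E).trace := by
  have hQE : (Q * E)ᵀ * E = (Q * E)ᵀ * (Q * E) := by
    rw [transpose_mul, hQ.eq, Matrix.mul_assoc, Matrix.mul_assoc, ← Matrix.mul_assoc Q Q, hQ'.eq]
  have hEQ : Eᵀ * (Q * E) = (Q * E)ᵀ * (Q * E) := by
    rw [← hQE, transpose_mul, hQ.eq, Matrix.mul_assoc]
  have hexp : (E - Q * E)ᵀ * (E - Q * E) = Eᵀ * E - (Q * E)ᵀ * (Q * E) := by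
    rw [transpose_sub, Matrix.sub_mul, Matrix.mul_sub, Matrix.mul_sub, hQE, hEQ]
    abel
  rw [hexp, trace_sub]
  exact sub_le_self _ (trace_transpose_mul_self_nonneg_s10 (Q * E))

end Ordered

end Matrix

theorem frobNorm_sub_mul_le {m n : ℕ} {Q : Matrix (Fin n) (Fin n) ℝ} (hQ : Q.IsSymm)
    (hQ' : IsIdempotentElem Q) (E : Matrix (Fin n) (Fin m) ℝ) :
    frobNorm (E - Q * E) ≤ frobNorm E :=
  Real.sqrt_le_sqrt (trace_transpose_mul_self_sub_mul_le hQ hQ' E)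

theorem satax_monotone_general (m n τ : ℕ)
    (A : Matrix (Fin m) (Fin n) ℝ) (Ap : Matrix (Fin n) (Fin m) ℝ)
    (hp1 : A * Ap * A = A)
    (hp3 : (A * Ap)ᵀ = A * Ap)
    (Xk : Matrix (Fin n) (Fin m) ℝ)
    (S : Matrix (Fin n) (Fin τ) ℝ)
    (M Mp : Matrix (Fin τ) (Fin τ) ℝ)
    (hM : M = Sᵀ * Aᵀ * A * Aᵀ * A * S)
    (hMp1 : M * Mp * M = M) (hMp2 : Mp * M * Mp = Mp)
    (hMp3 : (M * Mp)ᵀ = M * Mp) (hMp4 : (Mp * M)ᵀ = Mp * M)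
    (X1 : Matrix (Fin n) (Fin m) ℝ)
    (hX1 : X1 = Xk - Aᵀ * A * S * Mp * Sᵀ * Aᵀ * (A * Xk - 1)) :
    frobNorm (X1 - Ap) ≤ frobNorm (Xk - Ap) := by
  set C := Aᵀ * A * S
  have hMp : IsPenroseInverse_s10 (Cᵀ * C) Mp := by
    have hMC : M = Cᵀ * C := by
      rw [hM]
      simp only [C, transpose_mul, transpose_transpose, Matrix.mul_assoc]
    exact hMC ▸ ⟨hMp1, hMp2, hMp3, hMp4⟩
  have hstep : X1 - Ap = (Xk - Ap) - C * Mp * Cᵀ * (Xk - Ap) := by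
    rw [hX1]
    simp only [C, transpose_mul, transpose_transpose, Matrix.mul_sub, Matrix.mul_one,
      Matrix.mul_assoc, transpose_mul_mul_eq_transpose hp1 hp3]
    abel
  rw [hstep]
  exact frobNorm_sub_mul_le hMp.isSymm_mul_mul_transpose
    hMp.isIdempotentElem_mul_mul_transpose_s10 (Xk - Ap)

/-- Monotonicity of the SATAX update: the Frobenius distance to the
pseudoinverse does not increase. -/
theorem satax_monotone (m n τ : ℕ)
    (A : Matrix (Fin m) (Fin n) ℝ) (Ap : Matrix (Fin n) (Fin m) ℝ)
    (hp1 : A * Ap * A = A) (hp2 : Ap * A * Ap = Ap)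
    (hp3 : (A * Ap)ᵀ = A * Ap) (hp4 : (Ap * A)ᵀ = Ap * A)
    (Xk : Matrix (Fin n) (Fin m) ℝ)
    (S : Matrix (Fin n) (Fin τ) ℝ)
    (M Mp : Matrix (Fin τ) (Fin τ) ℝ)
    (hM : M = Sᵀ * Aᵀ * A * Aᵀ * A * S)
    (hMp1 : M * Mp * M = M) (hMp2 : Mp * M * Mp = Mp)
    (hMp3 : (M * Mp)ᵀ = M * Mp) (hMp4 : (Mp * M)ᵀ = Mp * M)
    (X1 : Matrix (Fin n) (Fin m) ℝ)
    (hX1 : X1 = Xk - Aᵀ * A * S * Mp * Sᵀ * Aᵀ * (A * Xk - 1)) :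
    frobNorm (X1 - Ap) ≤ frobNorm (Xk - Ap) :=
  satax_monotone_general m n τ A Ap hp1 hp3 Xk S M Mp hM hMp1 hMp2 hMp3 hMp4 X1 hX1
end

section
/- Let A be a real symmetric n×n matrix, X_k a real n×n matrix, S a real n×τ matrix, and let M⁺ be the Moore–Penrose pseudoinverse of M := Sᵀ A² S. Define X_{k+1} := X_k + A S M⁺ Sᵀ (A − A X_k A) S M⁺ Sᵀ A. Then X_{k+1} solves the symmetric-sketch projection problem min ½‖X − X_k‖_F² subject to Sᵀ A X A S = Sᵀ A S; that is, Sᵀ A X_{k+1} A S = Sᵀ A S, and every real n×n matrix X with Sᵀ A X A S = Sᵀ A S satisfies ‖X_{k+1} − X_k‖_F ≤ ‖X − X_k‖_F. -/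
/-!
Write `B := Sᵀ A`, so that `M = B Bᵀ` and the constraint reads `B X Bᵀ = Sᵀ A S`. Since
`ker M = ker Bᵀ`, the Penrose equation `M M⁺ M = M` gives `Bᵀ M⁺ M = Bᵀ` and `M M⁺ B = B`, hence
`B (Bᵀ M⁺ Y M⁺ B) Bᵀ = Y` for every `Y` of the form `B P = Q Bᵀ`, such as the residual
`Sᵀ A S − B X_k Bᵀ`; so `X_{k+1}` is feasible. The step `X_{k+1} − X_k = Bᵀ (⋯) B`
is Frobenius-orthogonal to every `W` with `B W Bᵀ = 0`, in particular to `X − X_{k+1}` for feasible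
`X`, and Pythagoras gives minimality.
-/

open Matrix

namespace Matrix

section GeneralizedInverse

variable {R m n : Type*} [Ring R] [PartialOrder R] [StarRing R] [StarOrderedRing R]
  [NoZeroDivisors R] [Fintype m] [Fintype n] {B : Matrix m n R} {G : Matrix m m R}

theorem conjTranspose_mul_mul_gram (hG : B * Bᴴ * G * (B * Bᴴ) = B * Bᴴ) :
    Bᴴ * G * (B * Bᴴ) = Bᴴ := by
  classical
  have h : B * Bᴴ * (G * (B * Bᴴ) - 1) = 0 := by
    rw [Matrix.mul_sub, ← Matrix.mul_assoc, hG, Matrix.mul_one, sub_self]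
  rwa [self_mul_conjTranspose_mul_eq_zero, Matrix.mul_sub, Matrix.mul_one, sub_eq_zero,
    ← Matrix.mul_assoc] at h

theorem gram_mul_mul_self (hG : B * Bᴴ * G * (B * Bᴴ) = B * Bᴴ) :
    B * Bᴴ * G * B = B := by
  classical
  have h : (B * Bᴴ * G - 1) * (B * Bᴴ) = 0 := by
    rw [Matrix.sub_mul, hG, Matrix.one_mul, sub_self]
  rwa [mul_self_mul_conjTranspose_eq_zero, Matrix.sub_mul, Matrix.one_mul, sub_eq_zero] at h

theorem gram_sandwich (hG : B * Bᴴ * G * (B * Bᴴ) = B * Bᴴ) {Y : Matrix m m R}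
    {P : Matrix n m R} {Q : Matrix m n R} (hP : Y = B * P) (hQ : Y = Q * Bᴴ) :
    B * Bᴴ * G * Y * G * (B * Bᴴ) = Y := by
  have hleft : B * Bᴴ * G * Y = Y := by rw [hP, ← Matrix.mul_assoc, gram_mul_mul_self hG]
  have hright : Y * G * (B * Bᴴ) = Y := by
    rw [hQ, Matrix.mul_assoc Q, Matrix.mul_assoc Q, conjTranspose_mul_mul_gram hG]
  rw [hleft, hright]

end GeneralizedInverse

theorem trace_transpose_mul_eq_zero {R m n : Type*} [CommSemiring R] [Fintype m] [Fintype n]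
    (B : Matrix m n R) (Y : Matrix m m R) {W : Matrix n n R} (hW : B * W * Bᵀ = 0) :
    ((Bᵀ * Y * B)ᵀ * W).trace = 0 := by
  rw [transpose_mul, transpose_mul, transpose_transpose, Matrix.mul_assoc, trace_mul_comm,
    Matrix.mul_assoc, Matrix.mul_assoc, ← Matrix.mul_assoc B, hW, Matrix.mul_zero, trace_zero]

end Matrix

theorem frobNorm_le_frobNorm_add {m n : ℕ} {D W : Matrix (Fin m) (Fin n) ℝ}
    (h : (Dᵀ * W).trace = 0) : frobNorm D ≤ frobNorm (D + W) := by
  have hWW : 0 ≤ (Wᵀ * W).trace := by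
    simpa only [conjTranspose_eq_transpose_of_trivial] using
      (posSemidef_conjTranspose_mul_self W).trace_nonneg
  have hWD : (Wᵀ * D).trace = 0 := by
    rw [← trace_transpose, transpose_mul, transpose_transpose, h]
  apply Real.sqrt_le_sqrt
  rw [transpose_add, Matrix.add_mul, Matrix.mul_add, Matrix.mul_add, trace_add, trace_add,
    trace_add, h, hWD]
  linarith

section SketchProjection

variable {m n : Type*} [Fintype m] [Fintype n]

/-- With `G` a generalized inverse of `B Bᵀ`, the candidate projection of `X₀` onto
`{X | B X Bᵀ = C}`. -/
def sketchProjection (B : Matrix m n ℝ) (G C : Matrix m m ℝ) (X₀ : Matrix n n ℝ) :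
    Matrix n n ℝ :=
  X₀ + Bᵀ * G * (C - B * X₀ * Bᵀ) * G * B

variable {B : Matrix m n ℝ} {G C : Matrix m m ℝ}

theorem mul_sketchProjection_mul_transpose (hG : B * Bᵀ * G * (B * Bᵀ) = B * Bᵀ)
    {P : Matrix n m ℝ} {Q : Matrix m n ℝ} (hP : C = B * P) (hQ : C = Q * Bᵀ)
    (X₀ : Matrix n n ℝ) : B * sketchProjection B G C X₀ * Bᵀ = C := by
  have hres : B * Bᵀ * G * (C - B * X₀ * Bᵀ) * G * (B * Bᵀ) = C - B * X₀ * Bᵀ := by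
    simp only [← conjTranspose_eq_transpose_of_trivial] at hG ⊢
    refine gram_sandwich hG (P := P - X₀ * Bᴴ) (Q := Q - B * X₀) ?_ ?_
    · rw [Matrix.mul_sub, ← hP, Matrix.mul_assoc]
    · rw [Matrix.sub_mul, conjTranspose_eq_transpose_of_trivial, ← hQ]
  have hassoc : B * (Bᵀ * G * (C - B * X₀ * Bᵀ) * G * B) * Bᵀ
      = B * Bᵀ * G * (C - B * X₀ * Bᵀ) * G * (B * Bᵀ) := by
    simp only [Matrix.mul_assoc]
  rw [sketchProjection, Matrix.mul_add, Matrix.add_mul, hassoc, hres, add_sub_cancel]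

end SketchProjection

theorem frobNorm_sketchProjection_sub_le {m n : ℕ} {B : Matrix (Fin m) (Fin n) ℝ}
    {G C : Matrix (Fin m) (Fin m) ℝ} (hG : B * Bᵀ * G * (B * Bᵀ) = B * Bᵀ)
    {P : Matrix (Fin n) (Fin m) ℝ} {Q : Matrix (Fin m) (Fin n) ℝ} (hP : C = B * P)
    (hQ : C = Q * Bᵀ) (X₀ X : Matrix (Fin n) (Fin n) ℝ) (hX : B * X * Bᵀ = C) :
    frobNorm (sketchProjection B G C X₀ - X₀) ≤ frobNorm (X - X₀) := by
  set X₁ := sketchProjection B G C X₀ with hX₁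
  have hstep : X₁ - X₀ = Bᵀ * (G * (C - B * X₀ * Bᵀ) * G) * B := by
    rw [hX₁, sketchProjection, add_sub_cancel_left]
    simp only [Matrix.mul_assoc]
  have hker : B * (X - X₁) * Bᵀ = 0 := by
    rw [Matrix.mul_sub, Matrix.sub_mul, hX, mul_sketchProjection_mul_transpose hG hP hQ, sub_self]
  have horth : ((X₁ - X₀)ᵀ * (X - X₁)).trace = 0 := by
    rw [hstep]
    exact trace_transpose_mul_eq_zero B _ hker
  simpa only [sub_add_sub_cancel'] using frobNorm_le_frobNorm_add horth

theorem saxas_update_is_projection_general (n τ : ℕ)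
    (A : Matrix (Fin n) (Fin n) ℝ) (hA : Aᵀ = A)
    (Xk : Matrix (Fin n) (Fin n) ℝ)
    (S : Matrix (Fin n) (Fin τ) ℝ)
    (M Mp : Matrix (Fin τ) (Fin τ) ℝ)
    (hM : M = Sᵀ * (A * A) * S)
    (hMp1 : M * Mp * M = M)
    (X1 : Matrix (Fin n) (Fin n) ℝ)
    (hX1 : X1 = Xk + A * S * Mp * Sᵀ * (A - A * Xk * A) * S * Mp * Sᵀ * A) :
    Sᵀ * A * X1 * A * S = Sᵀ * A * S ∧
    ∀ X : Matrix (Fin n) (Fin n) ℝ, Sᵀ * A * X * A * S = Sᵀ * A * S →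
      frobNorm (X1 - Xk) ≤ frobNorm (X - Xk) := by
  set B := Sᵀ * A with hB
  have hBt : Bᵀ = A * S := by rw [hB, transpose_mul, hA, transpose_transpose]
  have hG : B * Bᵀ * Mp * (B * Bᵀ) = B * Bᵀ := by
    have hgram : M = B * Bᵀ := by
      rw [hM, hBt, hB]
      simp only [Matrix.mul_assoc]
    rwa [← hgram]
  have hQ : B * S = Sᵀ * Bᵀ := by rw [hBt, hB, Matrix.mul_assoc]
  have hsketch (X : Matrix (Fin n) (Fin n) ℝ) : B * X * A * S = B * X * Bᵀ := by
    rw [hBt, Matrix.mul_assoc _ A S]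
  have hX1' : X1 = sketchProjection B Mp (B * S) Xk := by
    rw [hX1, sketchProjection, hBt, hB]
    simp only [Matrix.mul_sub, Matrix.sub_mul, Matrix.mul_assoc]
  refine ⟨?_, fun X hX => ?_⟩
  · rw [hsketch, hX1']
    exact mul_sketchProjection_mul_transpose hG rfl hQ Xk
  · rw [hX1']
    exact frobNorm_sketchProjection_sub_le hG rfl hQ Xk X (by rwa [← hsketch])

/-- The SAXAS update `X_{k+1} = X_k + A S M⁺ Sᵀ (A − A X_k A) S M⁺ Sᵀ A`,
with `A` symmetric and `M := Sᵀ A² S`, is the projection of `X_k` onto the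
symmetric-sketch constraint `Sᵀ A X A S = Sᵀ A S`. -/
theorem saxas_update_is_projection (n τ : ℕ)
    (A : Matrix (Fin n) (Fin n) ℝ) (hA : Aᵀ = A)
    (Xk : Matrix (Fin n) (Fin n) ℝ)
    (S : Matrix (Fin n) (Fin τ) ℝ)
    (M Mp : Matrix (Fin τ) (Fin τ) ℝ)
    (hM : M = Sᵀ * (A * A) * S)
    (hMp1 : M * Mp * M = M) (hMp2 : Mp * M * Mp = Mp)
    (hMp3 : (M * Mp)ᵀ = M * Mp) (hMp4 : (Mp * M)ᵀ = Mp * M)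
    (X1 : Matrix (Fin n) (Fin n) ℝ)
    (hX1 : X1 = Xk + A * S * Mp * Sᵀ * (A - A * Xk * A) * S * Mp * Sᵀ * A) :
    Sᵀ * A * X1 * A * S = Sᵀ * A * S ∧
    ∀ X : Matrix (Fin n) (Fin n) ℝ, Sᵀ * A * X * A * S = Sᵀ * A * S →
      frobNorm (X1 - Xk) ≤ frobNorm (X - Xk) :=
  saxas_update_is_projection_general n τ A hA Xk S M Mp hM hMp1 X1 hX1
end

section
/- Let A be a real symmetric n×n matrix with Moore–Penrose pseudoinverse A⁺, X_k a real n×n matrix, S a real n×τ matrix, and M⁺ the Moore–Penrose pseudoinverse of M := Sᵀ A² S. Let Z := A S M⁺ Sᵀ A and define the SAXAS update X_{k+1} := X_k + A S M⁺ Sᵀ (A − A X_k A) S M⁺ Sᵀ A. Then the residuals R_k := X_k − A⁺ and R_{k+1} := X_{k+1} − A⁺ satisfy the recursion R_{k+1} = R_k − Z R_k Z. -/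
/-!
Writing `Z = P A = A Q` with `P = A S M⁺ Sᵀ` and `Q = S M⁺ Sᵀ A`, the identity `A A⁺ A = A` gives
`Z R_k Z = P (A X_k A - A A⁺ A) Q = P (A X_k A - A) Q`, which is minus the SAXAS update term.
-/

open Matrix

section InnerInverse

variable {R : Type*} [Ring R] {a b : R}

theorem mul_sub_mul_eq_of_mul_mul_eq (h : a * b * a = a) (x : R) :
    a * (x - b) * a = a * x * a - a := by
  rw [mul_sub, sub_mul, h]

theorem add_mul_sub_mul_sub_eq_of_mul_mul_eq (h : a * b * a = a) (x p q : R) :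
    x + p * (a - a * x * a) * q - b = (x - b) - p * a * (x - b) * (a * q) := by
  rw [show p * a * (x - b) * (a * q) = p * (a * (x - b) * a) * q by simp only [mul_assoc],
    mul_sub_mul_eq_of_mul_mul_eq h]
  noncomm_ring

end InnerInverse

theorem saxas_residual_recursion_general (n τ : ℕ)
    (A : Matrix (Fin n) (Fin n) ℝ)
    (Ap : Matrix (Fin n) (Fin n) ℝ)
    (hp1 : A * Ap * A = A)
    (Xk : Matrix (Fin n) (Fin n) ℝ)
    (S : Matrix (Fin n) (Fin τ) ℝ)
    (Mp : Matrix (Fin τ) (Fin τ) ℝ)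
    (Z : Matrix (Fin n) (Fin n) ℝ) (hZ : Z = A * S * Mp * Sᵀ * A)
    (X1 : Matrix (Fin n) (Fin n) ℝ)
    (hX1 : X1 = Xk + A * S * Mp * Sᵀ * (A - A * Xk * A) * S * Mp * Sᵀ * A) :
    X1 - Ap = (Xk - Ap) - Z * (Xk - Ap) * Z := by
  subst hZ hX1
  simpa only [Matrix.mul_assoc] using
    add_mul_sub_mul_sub_eq_of_mul_mul_eq hp1 Xk (A * S * Mp * Sᵀ) (S * Mp * Sᵀ * A)

/-- The SAXAS residuals satisfy `R_{k+1} = R_k − Z R_k Z` where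
`Z := A S M⁺ Sᵀ A`, `M := Sᵀ A² S`, and `R_k := X_k − A⁺`. -/
theorem saxas_residual_recursion (n τ : ℕ)
    (A : Matrix (Fin n) (Fin n) ℝ) (hA : Aᵀ = A)
    (Ap : Matrix (Fin n) (Fin n) ℝ)
    (hp1 : A * Ap * A = A) (hp2 : Ap * A * Ap = Ap)
    (hp3 : (A * Ap)ᵀ = A * Ap) (hp4 : (Ap * A)ᵀ = Ap * A)
    (Xk : Matrix (Fin n) (Fin n) ℝ)
    (S : Matrix (Fin n) (Fin τ) ℝ)
    (M Mp : Matrix (Fin τ) (Fin τ) ℝ)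
    (hM : M = Sᵀ * (A * A) * S)
    (hMp1 : M * Mp * M = M) (hMp2 : Mp * M * Mp = Mp)
    (hMp3 : (M * Mp)ᵀ = M * Mp) (hMp4 : (Mp * M)ᵀ = Mp * M)
    (Z : Matrix (Fin n) (Fin n) ℝ) (hZ : Z = A * S * Mp * Sᵀ * A)
    (X1 : Matrix (Fin n) (Fin n) ℝ)
    (hX1 : X1 = Xk + A * S * Mp * Sᵀ * (A - A * Xk * A) * S * Mp * Sᵀ * A) :
    X1 - Ap = (Xk - Ap) - Z * (Xk - Ap) * Z :=
  saxas_residual_recursion_general n τ A Ap hp1 Xk S Mp Z hZ X1 hX1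
end

section
/- Let A be a real symmetric n×n matrix with Moore–Penrose pseudoinverse A⁺, and let (A²)⁺ denote the Moore–Penrose pseudoinverse of A². Then A (A²)⁺ A (A²)⁺ A = A⁺. (Equivalently, starting the SAXAS iteration from X_0 = 0 with the full sketch S = I yields the pseudoinverse in one step.) -/
/-!
Penrose's equations make sense in any semigroup with an involution, and there they determine
the pseudoinverse uniquely. Since `star` maps solutions for `a` to solutions for `star a`, a
self-adjoint `a` has a self-adjoint pseudoinverse `p` commuting with `a`. Then `p * p` solves
Penrose's equations for `a * a`, so `(a²)⁺ = p²`, and `a p² a p² a` collapses to `p`.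
-/

open Matrix

section StarSemigroup

variable {R : Type*} [Semigroup R] [StarMul R]

structure IsMoorePenroseInverse (a p : R) : Prop where
  mul_mul_self : a * p * a = a
  mul_mul_self' : p * a * p = p
  isSelfAdjoint_mul : IsSelfAdjoint (a * p)
  isSelfAdjoint_mul' : IsSelfAdjoint (p * a)

namespace IsMoorePenroseInverse

variable {a p q : R}

theorem mul_eq (hp : IsMoorePenroseInverse a p) (hq : IsMoorePenroseInverse a q) :
    a * p = a * q :=
  calc a * p = star (a * p) := hp.isSelfAdjoint_mul.star_eq.symm
    _ = star (a * q * a * p) := by rw [hq.mul_mul_self]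
    _ = star (a * p) * star (a * q) := by simp only [star_mul, mul_assoc]
    _ = a * p * (a * q) := by rw [hp.isSelfAdjoint_mul.star_eq, hq.isSelfAdjoint_mul.star_eq]
    _ = a * p * a * q := by simp only [mul_assoc]
    _ = a * q := by rw [hp.mul_mul_self]

theorem mul_eq' (hp : IsMoorePenroseInverse a p) (hq : IsMoorePenroseInverse a q) :
    p * a = q * a :=
  calc p * a = star (p * a) := hp.isSelfAdjoint_mul'.star_eq.symm
    _ = star (p * (a * q * a)) := by rw [hq.mul_mul_self]
    _ = star (q * a) * star (p * a) := by simp only [star_mul, mul_assoc]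
    _ = q * a * (p * a) := by rw [hp.isSelfAdjoint_mul'.star_eq, hq.isSelfAdjoint_mul'.star_eq]
    _ = q * (a * p * a) := by simp only [mul_assoc]
    _ = q * a := by rw [hp.mul_mul_self]

theorem unique (hp : IsMoorePenroseInverse a p) (hq : IsMoorePenroseInverse a q) : p = q :=
  calc p = p * a * p := hp.mul_mul_self'.symm
    _ = q * (a * p) := by rw [mul_eq' hp hq, mul_assoc]
    _ = q * a * q := by rw [mul_eq hp hq, mul_assoc]
    _ = q := hq.mul_mul_self'

theorem star (hp : IsMoorePenroseInverse a p) :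
    IsMoorePenroseInverse (star a) (star p) where
  mul_mul_self := by simpa only [star_mul, mul_assoc] using congrArg Star.star hp.mul_mul_self
  mul_mul_self' := by simpa only [star_mul, mul_assoc] using congrArg Star.star hp.mul_mul_self'
  isSelfAdjoint_mul := by rw [← star_mul, IsSelfAdjoint.star_iff]; exact hp.isSelfAdjoint_mul'
  isSelfAdjoint_mul' := by rw [← star_mul, IsSelfAdjoint.star_iff]; exact hp.isSelfAdjoint_mul

theorem isSelfAdjoint (ha : IsSelfAdjoint a) (hp : IsMoorePenroseInverse a p) :
    IsSelfAdjoint p :=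
  (ha.star_eq ▸ hp.star).unique hp

theorem commute (ha : IsSelfAdjoint a) (hp : IsMoorePenroseInverse a p) : Commute a p :=
  calc a * p = Star.star (a * p) := hp.isSelfAdjoint_mul.star_eq.symm
    _ = p * a := by rw [star_mul, (hp.isSelfAdjoint ha).star_eq, ha.star_eq]

theorem mul_self (ha : IsSelfAdjoint a) (hp : IsMoorePenroseInverse a p) :
    IsMoorePenroseInverse (a * a) (p * p) := by
  have hap : a * p = p * a := (hp.commute ha).eq
  have hsq : a * a * (p * p) = a * p :=
    calc a * a * (p * p) = a * (a * p) * p := by simp only [mul_assoc]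
      _ = a * (p * a * p) := by rw [hap, mul_assoc]
      _ = a * p := by rw [hp.mul_mul_self']
  have hsq' : p * p * (a * a) = p * a :=
    calc p * p * (a * a) = p * (p * a) * a := by simp only [mul_assoc]
      _ = p * (a * p * a) := by rw [← hap, mul_assoc]
      _ = p * a := by rw [hp.mul_mul_self]
  refine ⟨?_, ?_, hsq ▸ hp.isSelfAdjoint_mul, hsq' ▸ hp.isSelfAdjoint_mul'⟩
  · rw [hsq, ← mul_assoc, hp.mul_mul_self]
  · rw [hsq', ← mul_assoc, hp.mul_mul_self']

theorem mul_mul_self_mul_mul_self_mul (ha : IsSelfAdjoint a) (hp : IsMoorePenroseInverse a p) :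
    a * (p * p) * a * (p * p) * a = p := by
  have hap : a * p = p * a := (hp.commute ha).eq
  have hpp : a * (p * p) = p := by rw [← mul_assoc, hap, hp.mul_mul_self']
  calc a * (p * p) * a * (p * p) * a = p * a * p * (p * a) := by rw [hpp]; simp only [mul_assoc]
    _ = p * (a * p) := by rw [hp.mul_mul_self', ← hap]
    _ = p := by rw [← mul_assoc, hp.mul_mul_self']

end IsMoorePenroseInverse

end StarSemigroup

namespace Matrix

variable {n α : Type*}

theorem star_eq_transpose [Star α] [TrivialStar α] (M : Matrix n n α) : star M = Mᵀ :=
  (star_eq_conjTranspose M).trans (conjTranspose_eq_transpose_of_trivial M)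

theorem isMoorePenroseInverse_iff [Fintype n] [NonUnitalCommSemiring α] [StarRing α]
    [TrivialStar α] (A P : Matrix n n α) :
    IsMoorePenroseInverse A P ↔
      A * P * A = A ∧ P * A * P = P ∧ (A * P)ᵀ = A * P ∧ (P * A)ᵀ = P * A := by
  simp only [← star_eq_transpose]
  exact ⟨fun ⟨h₁, h₂, h₃, h₄⟩ ↦ ⟨h₁, h₂, h₃, h₄⟩, fun ⟨h₁, h₂, h₃, h₄⟩ ↦ ⟨h₁, h₂, h₃, h₄⟩⟩

end Matrix

/-- For a symmetric matrix `A`, with `(A²)⁺` the pseudoinverse of `A²`,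
`A (A²)⁺ A (A²)⁺ A = A⁺`: the full-sketch SAXAS iteration started at `X₀ = 0`
yields the pseudoinverse in one step. -/
theorem saxas_full_sketch_one_step (n : ℕ)
    (A : Matrix (Fin n) (Fin n) ℝ) (hA : Aᵀ = A)
    (Ap : Matrix (Fin n) (Fin n) ℝ)
    (hp1 : A * Ap * A = A) (hp2 : Ap * A * Ap = Ap)
    (hp3 : (A * Ap)ᵀ = A * Ap) (hp4 : (Ap * A)ᵀ = Ap * A)
    (A2p : Matrix (Fin n) (Fin n) ℝ)
    (hq1 : (A * A) * A2p * (A * A) = A * A) (hq2 : A2p * (A * A) * A2p = A2p)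
    (hq3 : ((A * A) * A2p)ᵀ = (A * A) * A2p) (hq4 : (A2p * (A * A))ᵀ = A2p * (A * A)) :
    A * A2p * A * A2p * A = Ap := by
  have hsa : IsSelfAdjoint A := (star_eq_transpose A).trans hA
  have hp : IsMoorePenroseInverse A Ap :=
    (isMoorePenroseInverse_iff A Ap).2 ⟨hp1, hp2, hp3, hp4⟩
  have hq : IsMoorePenroseInverse (A * A) A2p :=
    (isMoorePenroseInverse_iff (A * A) A2p).2 ⟨hq1, hq2, hq3, hq4⟩
  rw [hq.unique (hp.mul_self hsa)]
  exact hp.mul_mul_self_mul_mul_self_mul hsa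
end

section
/- Let G be a real symmetric positive semidefinite n×n matrix. Let S_1,…,S_r be real n×q_i matrices with G S_i ≠ 0 for each i, let M_i⁺ denote the Moore–Penrose pseudoinverse of M_i := S_iᵀ G² S_i, set T := Σ_{i=1}^r Tr(S_iᵀ G² S_i), and define the probabilities p_i := Tr(S_iᵀ G² S_i) / T. Let 𝕊 := [S_1, …, S_r] be the column concatenation, and suppose μ > 0 is such that every nonzero eigenvalue of the block Gram matrix 𝕊ᵀ G² 𝕊 is at least μ. Then every nonzero eigenvalue of the symmetric positive semidefinite matrix G (Σ_{i=1}^r p_i S_i M_i⁺ S_iᵀ) G is at least μ / T; that is, λ⁺_min(G E[S (Sᵀ G² S)⁺ Sᵀ] G) ≥ λ⁺_min(𝕊ᵀ G² 𝕊) / Tr(𝕊ᵀ G² 𝕊). -/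
open Matrix

section Aux

lemma real_conjT {a b : Type*} (A : Matrix a b ℝ) : Aᴴ = Aᵀ :=
  conjTranspose_eq_transpose_of_trivial A

lemma pinv_unique' {ι : Type*} [Fintype ι] (M : Matrix ι ι ℝ) :
    ∀ P Q : Matrix ι ι ℝ,
      M * P * M = M → P * M * P = P → (M * P)ᵀ = M * P → (P * M)ᵀ = P * M →
      M * Q * M = M → Q * M * Q = Q → (M * Q)ᵀ = M * Q → (Q * M)ᵀ = Q * M → P = Q := by
  intro P Q hP1 hP2 hP3 hP4 hQ1 hQ2 hQ3 hQ4
  have hMP : M * P = M * Q := by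
    calc M * P = (M * Q * M) * P := by rw [hQ1]
    _ = (M * Q) * (M * P) := by noncomm_ring
    _ = (M * Q)ᵀ * (M * P)ᵀ := by rw [hQ3, hP3]
    _ = Qᵀ * (M * P * M)ᵀ := by simp only [transpose_mul]; noncomm_ring
    _ = Qᵀ * Mᵀ := by rw [hP1]
    _ = (M * Q)ᵀ := by rw [transpose_mul]
    _ = M * Q := hQ3
  have hPM : P * M = Q * M := by
    calc P * M = P * (M * Q * M) := by rw [hQ1]
    _ = (P * M) * (Q * M) := by noncomm_ring
    _ = (P * M)ᵀ * (Q * M)ᵀ := by rw [hP4, hQ4]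
    _ = (M * P * M)ᵀ * Qᵀ := by simp only [transpose_mul]; noncomm_ring
    _ = Mᵀ * Qᵀ := by rw [hP1]
    _ = (Q * M)ᵀ := by rw [transpose_mul]
    _ = Q * M := hQ4
  calc P = P * M * P := hP2.symm
  _ = P * (M * Q) := by rw [← hMP, mul_assoc]
  _ = (Q * M) * Q := by rw [← hPM, mul_assoc]
  _ = Q := hQ2

lemma pinv_symm {ι : Type*} [Fintype ι] (M Mp : Matrix ι ι ℝ) (hMsym : Mᵀ = M)
    (hMp1 : M * Mp * M = M) (hMp2 : Mp * M * Mp = Mp)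
    (hMp3 : (M * Mp)ᵀ = M * Mp) (hMp4 : (Mp * M)ᵀ = Mp * M) : Mpᵀ = Mp := by
  refine (pinv_unique' M Mp Mpᵀ hMp1 hMp2 hMp3 hMp4 ?_ ?_ ?_ ?_).symm
  · have e : M * Mpᵀ * M = (Mᵀ * Mp * Mᵀ)ᵀ := by
      simp [transpose_mul, Matrix.mul_assoc]
    rw [e, hMsym, hMp1, hMsym]
  · have e : Mpᵀ * M * Mpᵀ = (Mp * Mᵀ * Mp)ᵀ := by
      simp [transpose_mul, Matrix.mul_assoc]
    rw [e, hMsym, hMp2]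
  · have e : (M * Mpᵀ)ᵀ = Mp * M := by simp [transpose_mul, hMsym]
    rw [e, ← hMp4]
    simp [transpose_mul, hMsym]
  · have e : (Mpᵀ * M)ᵀ = M * Mp := by simp [transpose_mul, hMsym]
    rw [e, ← hMp3]
    simp [transpose_mul, hMsym]

lemma spectral_decomp' {ι : Type*} [Fintype ι] [DecidableEq ι]
    {A : Matrix ι ι ℝ} (hA : A.IsHermitian) :
    A = (hA.eigenvectorUnitary : Matrix ι ι ℝ) * diagonal hA.eigenvalues *
      star (hA.eigenvectorUnitary : Matrix ι ι ℝ) := by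
  have := hA.spectral_theorem
  simpa using this

lemma aux_psd {ι : Type*} [Fintype ι] [DecidableEq ι]
    {A : Matrix ι ι ℝ} (hA : A.IsHermitian) (α β : ℝ)
    (h : ∀ j, 0 ≤ α * hA.eigenvalues j + β * (hA.eigenvalues j * hA.eigenvalues j)) :
    (α • A + β • (A * A)).PosSemidef := by
  set U : Matrix ι ι ℝ := (hA.eigenvectorUnitary : Matrix ι ι ℝ) with hUdef
  have hsU : star U * U = 1 := (Matrix.mem_unitaryGroup_iff').mp hA.eigenvectorUnitary.2
  set d : ι → ℝ := hA.eigenvalues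
  have hsp : A = U * diagonal d * star U := spectral_decomp' hA
  have key : α • A + β • (A * A) =
      U * diagonal (fun j => α * d j + β * (d j * d j)) * star U := by
    have hA2 : A * A = U * (diagonal d * diagonal d) * star U := by
      rw [hsp]
      calc (U * diagonal d * star U) * (U * diagonal d * star U)
          = U * diagonal d * (star U * U) * diagonal d * star U := by noncomm_ring
        _ = U * (diagonal d * diagonal d) * star U := by rw [hsU]; noncomm_ring
    rw [hsp]; rw [show (U * diagonal d * star U) * (U * diagonal d * star U)
        = U * (diagonal d * diagonal d) * star U from hsp ▸ hA2]
    rw [diagonal_mul_diagonal]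
    have : diagonal (fun j => α * d j + β * (d j * d j))
        = α • diagonal d + β • diagonal (fun j => d j * d j) := by
      rw [← diagonal_smul, ← diagonal_smul, ← diagonal_add]
      congr 1
    rw [this]
    simp only [Matrix.add_mul, Matrix.mul_add, Matrix.smul_mul, Matrix.mul_smul]
  rw [key]
  have hd : (diagonal (fun j => α * d j + β * (d j * d j))).PosSemidef :=
    posSemidef_diagonal_iff.mpr h
  have := hd.mul_mul_conjTranspose_same U
  simpa [Matrix.star_eq_conjTranspose] using this

lemma trace_eq_sum_eig {ι : Type*} [Fintype ι] [DecidableEq ι]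
    {A : Matrix ι ι ℝ} (hA : A.IsHermitian) :
    A.trace = ∑ j, hA.eigenvalues j := by
  set U : Matrix ι ι ℝ := (hA.eigenvectorUnitary : Matrix ι ι ℝ)
  have hsU : star U * U = 1 := (Matrix.mem_unitaryGroup_iff').mp hA.eigenvectorUnitary.2
  conv_lhs => rw [spectral_decomp' hA]
  rw [trace_mul_cycle]
  rw [show star U * U * diagonal hA.eigenvalues = diagonal hA.eigenvalues by
    rw [hsU, one_mul]]
  rw [trace_diagonal]

lemma psd_smul {ι : Type*} [Fintype ι] {A : Matrix ι ι ℝ} (hA : A.PosSemidef)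
    {t : ℝ} (ht : 0 ≤ t) : (t • A).PosSemidef := by
  refine PosSemidef.of_dotProduct_mulVec_nonneg ?_ ?_
  · show (t • A)ᴴ = t • A
    rw [real_conjT, transpose_smul]
    rw [show Aᵀ = A from by rw [← real_conjT]; exact hA.1]
  · intro x
    rw [smul_mulVec, dotProduct_smul, smul_eq_mul]
    exact mul_nonneg ht (hA.dotProduct_mulVec_nonneg x)

lemma tr_mul_self_pos {a b : Type*} [Fintype a] [Fintype b]
    (B : Matrix a b ℝ) (hB : B ≠ 0) : 0 < (Bᵀ * B).trace := by
  have htr : (Bᵀ * B).trace = ∑ j, ∑ x, (B x j) ^ 2 := by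
    simp [Matrix.trace, Matrix.diag, Matrix.mul_apply, sq]
  rw [htr]
  obtain ⟨x0, j0, hx⟩ : ∃ x j, B x j ≠ 0 := by
    by_contra h
    push_neg at h
    exact hB (by ext x j; simpa using h x j)
  have h1 : (0:ℝ) < ∑ x, (B x j0) ^ 2 := by
    have hle : (B x0 j0) ^ 2 ≤ ∑ x, (B x j0) ^ 2 :=
      Finset.single_le_sum (f := fun x => (B x j0) ^ 2)
        (fun i _ => sq_nonneg _) (Finset.mem_univ x0)
    have : (0:ℝ) < (B x0 j0) ^ 2 := by positivity
    linarith
  have hle : ∑ x, (B x j0) ^ 2 ≤ ∑ j, ∑ x, (B x j) ^ 2 :=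
    Finset.single_le_sum (f := fun j => ∑ x, (B x j) ^ 2)
      (fun i _ => Finset.sum_nonneg fun x _ => sq_nonneg _) (Finset.mem_univ j0)
  linarith

lemma per_sketch {a b : Type*} [Fintype a] [Fintype b]
    (B : Matrix a b ℝ) (M Mp : Matrix b b ℝ)
    (hMB : M = Bᵀ * B)
    (hMp1 : M * Mp * M = M) (hMp2 : Mp * M * Mp = Mp)
    (hMp3 : (M * Mp)ᵀ = M * Mp) (hMp4 : (Mp * M)ᵀ = Mp * M) [DecidableEq b] :
    (M.trace • (B * Mp * Bᵀ) - B * Bᵀ).PosSemidef := by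
  have hMsym : Mᵀ = M := by rw [hMB]; simp [transpose_mul, Matrix.mul_assoc]
  have hMherm : M.IsHermitian := by
    show Mᴴ = M; rw [real_conjT]; exact hMsym
  have hMpsym : Mpᵀ = Mp := pinv_symm M Mp hMsym hMp1 hMp2 hMp3 hMp4
  have hK1 : M * Mp * Bᵀ = Bᵀ := by
    have hX : Bᵀ - M * Mp * Bᵀ = (1 - M * Mp) * Bᵀ := by
      rw [Matrix.sub_mul, Matrix.one_mul]
    have hzero : (Bᵀ - M * Mp * Bᵀ) * (Bᵀ - M * Mp * Bᵀ)ᴴ = 0 := by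
      rw [real_conjT, hX, transpose_mul, transpose_transpose]
      have e : (1 - M * Mp) * Bᵀ * (B * (1 - M * Mp)ᵀ)
          = ((1 - M * Mp) * M) * (1 - M * Mp)ᵀ := by
        rw [hMB]; simp only [Matrix.mul_assoc]
      rw [e]
      have h0 : (1 - M * Mp) * M = 0 := by
        rw [Matrix.sub_mul, Matrix.one_mul, Matrix.mul_assoc]
        rw [show M * (Mp * M) = M from by rw [← Matrix.mul_assoc, hMp1]]
        simp
      rw [h0, Matrix.zero_mul]
    have hXz := Matrix.self_mul_conjTranspose_eq_zero.mp hzero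
    exact (sub_eq_zero.mp hXz).symm
  have hB2 : B * Mp * M = B := by
    have := congrArg transpose hK1
    simpa [transpose_mul, hMsym, hMpsym, Matrix.mul_assoc] using this
  have key : M.trace • (B * Mp * Bᵀ) - B * Bᵀ
      = (B * Mp) * (M.trace • M - M * M) * (B * Mp)ᵀ := by
    have e1 : (B * Mp) * M * (B * Mp)ᵀ = B * Mp * Bᵀ := by
      rw [transpose_mul, hMpsym]
      calc B * Mp * M * (Mp * Bᵀ) = B * (Mp * M * Mp) * Bᵀ := by
            simp only [Matrix.mul_assoc]
      _ = B * Mp * Bᵀ := by rw [hMp2, Matrix.mul_assoc]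
    have e2 : (B * Mp) * (M * M) * (B * Mp)ᵀ = B * Bᵀ := by
      rw [transpose_mul, hMpsym]
      calc B * Mp * (M * M) * (Mp * Bᵀ) = (B * Mp * M) * (M * Mp * Bᵀ) := by
            simp only [Matrix.mul_assoc]
      _ = B * Bᵀ := by rw [hB2, hK1]
    rw [Matrix.mul_sub, Matrix.sub_mul, Matrix.mul_smul, Matrix.smul_mul, e1, e2]
  have hMpsd : M.PosSemidef := by
    rw [hMB, ← real_conjT]; exact posSemidef_conjTranspose_mul_self B
  have hmid : (M.trace • M - M * M).PosSemidef := by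
    have hcond : ∀ j, 0 ≤ M.trace * hMherm.eigenvalues j
        + (-1) * (hMherm.eigenvalues j * hMherm.eigenvalues j) := by
      intro j
      have h0 : 0 ≤ hMherm.eigenvalues j := hMpsd.eigenvalues_nonneg j
      have hle : hMherm.eigenvalues j ≤ M.trace := by
        rw [trace_eq_sum_eig hMherm]
        exact Finset.single_le_sum (fun i _ => hMpsd.eigenvalues_nonneg i) (Finset.mem_univ j)
      nlinarith
    have h := aux_psd hMherm M.trace (-1) hcond
    have e : M.trace • M + (-1 : ℝ) • (M * M) = M.trace • M - M * M := by
      simp [sub_eq_add_neg]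
    rwa [e] at h
  rw [key]
  have := hmid.mul_mul_conjTranspose_same (B * Mp)
  rwa [real_conjT] at this

end Aux

/-- Convenient probability lemma: with `G` symmetric positive semidefinite,
sketches `S_i` (with `G S_i ≠ 0`), probabilities
`p_i = Tr(S_iᵀ G² S_i) / T` where `T = Σ_i Tr(S_iᵀ G² S_i)`, and `μ > 0` a
lower bound on the nonzero eigenvalues of the block Gram matrix `𝕊ᵀ G² 𝕊`
(`𝕊` being the column concatenation of the `S_i`), every nonzero eigenvalue of
`G (Σ_i p_i S_i M_i⁺ S_iᵀ) G` is at least `μ / T`. -/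
theorem convenient_probability_lemma (n r : ℕ) (q : Fin r → ℕ)
    (G : Matrix (Fin n) (Fin n) ℝ) (hG : G.PosSemidef)
    (S : (i : Fin r) → Matrix (Fin n) (Fin (q i)) ℝ)
    (hS : ∀ i, G * S i ≠ 0)
    (M Mp : (i : Fin r) → Matrix (Fin (q i)) (Fin (q i)) ℝ)
    (hM : ∀ i, M i = (S i)ᵀ * (G * G) * S i)
    (hMp1 : ∀ i, M i * Mp i * M i = M i) (hMp2 : ∀ i, Mp i * M i * Mp i = Mp i)
    (hMp3 : ∀ i, (M i * Mp i)ᵀ = M i * Mp i) (hMp4 : ∀ i, (Mp i * M i)ᵀ = Mp i * M i)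
    (T : ℝ) (hT : T = ∑ i, (M i).trace)
    (p : Fin r → ℝ) (hp : ∀ i, p i = (M i).trace / T)
    (BS : Matrix (Fin n) ((i : Fin r) × Fin (q i)) ℝ)
    (hBS : ∀ (x : Fin n) (j : (i : Fin r) × Fin (q i)), BS x j = S j.1 x j.2)
    (μ : ℝ) (hμ : 0 < μ)
    (heig : ∀ (c : ℝ) (v : ((i : Fin r) × Fin (q i)) → ℝ), v ≠ 0 →
      (BSᵀ * (G * G) * BS).mulVec v = c • v → c ≠ 0 → μ ≤ c) :
    ∀ (c : ℝ) (v : Fin n → ℝ), v ≠ 0 →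
      (G * (∑ i, p i • (S i * Mp i * (S i)ᵀ)) * G).mulVec v = c • v → c ≠ 0 →
      μ / T ≤ c := by
  intro c v hv hev hc
  have hGsym : Gᵀ = G := by
    have h2 : Gᴴ = G := hG.1
    rwa [real_conjT] at h2
  set E : Matrix (Fin n) (Fin n) ℝ := G * (∑ i, p i • (S i * Mp i * (S i)ᵀ)) * G with hEdef
  set Bm : Matrix (Fin n) ((i : Fin r) × Fin (q i)) ℝ := G * BS with hBmdef
  set A : Matrix ((i : Fin r) × Fin (q i)) ((i : Fin r) × Fin (q i)) ℝ
    := BSᵀ * (G * G) * BS with hAdef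
  -- basic facts
  have hABm : A = Bmᵀ * Bm := by
    rw [hAdef, hBmdef]
    simp [transpose_mul, hGsym, Matrix.mul_assoc]
  have hAsym : Aᵀ = A := by rw [hABm]; simp [transpose_mul, Matrix.mul_assoc]
  have hAherm : A.IsHermitian := by show Aᴴ = A; rw [real_conjT]; exact hAsym
  have hApsd : A.PosSemidef := by
    rw [hABm, ← real_conjT]; exact posSemidef_conjTranspose_mul_self Bm
  -- T positivity
  have hMBi : ∀ i, M i = (G * S i)ᵀ * (G * S i) := by
    intro i
    rw [hM i]; simp [transpose_mul, hGsym, Matrix.mul_assoc]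
  have hTrpos : ∀ i, 0 < (M i).trace := by
    intro i
    rw [hMBi i]
    exact tr_mul_self_pos _ (hS i)
  have hr : Nonempty (Fin r) := by
    by_contra hre
    have huniv : (Finset.univ : Finset (Fin r)) = ∅ := by
      simpa using Finset.univ_eq_empty_iff.mpr (not_nonempty_iff.mp hre)
    have hE0 : E = 0 := by
      rw [hEdef, huniv, Finset.sum_empty, Matrix.mul_zero, Matrix.zero_mul]
    rw [hE0, Matrix.zero_mulVec] at hev
    exact hv (by simpa [smul_eq_zero, hc] using hev.symm)
  have hTpos : 0 < T := by
    rw [hT]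
    exact Finset.sum_pos (fun i _ => hTrpos i) Finset.univ_nonempty
  -- step: E as a sum of per-sketch terms
  have hEsum : E = ∑ i, p i • ((G * S i) * Mp i * (G * S i)ᵀ) := by
    rw [hEdef, Matrix.mul_sum, Matrix.sum_mul]
    refine Finset.sum_congr rfl fun i _ => ?_
    simp [transpose_mul, hGsym, Matrix.mul_assoc, Matrix.mul_smul, Matrix.smul_mul]
  -- Bm entries
  have hBm_apply : ∀ (x : Fin n) (ij : (i : Fin r) × Fin (q i)),
      Bm x ij = (G * S ij.1) x ij.2 := by
    intro x ij
    rw [hBmdef]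
    simp [Matrix.mul_apply, hBS]
  have hKsum : Bm * Bmᵀ = ∑ i, (G * S i) * (G * S i)ᵀ := by
    ext x z
    calc (Bm * Bmᵀ) x z = ∑ ij : (i : Fin r) × Fin (q i), Bm x ij * Bm z ij := by
          simp [Matrix.mul_apply, transpose_apply]
    _ = ∑ i, ∑ j, Bm x ⟨i, j⟩ * Bm z ⟨i, j⟩ := by
          rw [← Finset.univ_sigma_univ, Finset.sum_sigma]
    _ = ∑ i, ((G * S i) * (G * S i)ᵀ) x z := by
          refine Finset.sum_congr rfl fun i _ => ?_
          simp [hBm_apply, Matrix.mul_apply, transpose_apply, mul_comm]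
    _ = (∑ i, (G * S i) * (G * S i)ᵀ) x z := by
          rw [Matrix.sum_apply]
  -- E dominates (1/T) K
  have hEK : (E - (1 / T) • (Bm * Bmᵀ)).PosSemidef := by
    have heq : E - (1 / T) • (Bm * Bmᵀ)
        = ∑ i, (1 / T) •
          ((M i).trace • ((G * S i) * Mp i * (G * S i)ᵀ) - (G * S i) * (G * S i)ᵀ) := by
      rw [hEsum, hKsum, Finset.smul_sum, ← Finset.sum_sub_distrib]
      refine Finset.sum_congr rfl fun i _ => ?_
      rw [smul_sub, smul_smul, hp i]
      congr 2
      ring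
    rw [heq]
    refine Finset.sum_induction _ Matrix.PosSemidef (fun a b ha hb => ha.add hb)
      Matrix.PosSemidef.zero (fun i _ => ?_)
    refine psd_smul ?_ (by positivity)
    exact per_sketch (G * S i) (M i) (Mp i) (hMBi i) (hMp1 i) (hMp2 i) (hMp3 i) (hMp4 i)
  -- v lies in the range of Bm
  set R : Matrix ((i : Fin r) × Fin (q i)) (Fin n) ℝ :=
    Matrix.of (fun ij x => p ij.1 * ((Mp ij.1 * (S ij.1)ᵀ * G) ij.2 x)) with hRdef
  have hER : E = Bm * R := by
    ext x z
    calc E x z = ∑ i, p i * ((G * S i) * (Mp i * (S i)ᵀ * G)) x z := by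
          rw [hEsum, Matrix.sum_apply]
          refine Finset.sum_congr rfl fun i _ => ?_
          have e : (G * S i) * Mp i * (G * S i)ᵀ = (G * S i) * (Mp i * (S i)ᵀ * G) := by
            simp [transpose_mul, hGsym, Matrix.mul_assoc]
          rw [e]
          simp
    _ = ∑ i, ∑ j, Bm x ⟨i, j⟩ * R ⟨i, j⟩ z := by
          refine Finset.sum_congr rfl fun i _ => ?_
          rw [Matrix.mul_apply, Finset.mul_sum]
          refine Finset.sum_congr rfl fun j _ => ?_
          rw [hBm_apply x ⟨i, j⟩, hRdef]
          simp only [Matrix.of_apply]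
          ring
    _ = ∑ ij : (i : Fin r) × Fin (q i), Bm x ij * R ij z := by
          rw [← Finset.univ_sigma_univ, Finset.sum_sigma]
    _ = (Bm * R) x z := (Matrix.mul_apply).symm
  set y : ((i : Fin r) × Fin (q i)) → ℝ := R *ᵥ (c⁻¹ • v) with hydef
  have hvy : v = Bm *ᵥ y := by
    have h1 : E *ᵥ (c⁻¹ • v) = v := by
      rw [mulVec_smul, hev, smul_smul, inv_mul_cancel₀ hc, one_smul]
    rw [← h1, hER, hydef, ← mulVec_mulVec]
  -- dot product bookkeeping
  have hBT : ∀ (a : Fin n → ℝ) (w : ((i : Fin r) × Fin (q i)) → ℝ),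
      a ⬝ᵥ (Bm *ᵥ w) = (Bmᵀ *ᵥ a) ⬝ᵥ w := by
    intro a w
    rw [dotProduct_mulVec, mulVec_transpose]
  have hAy : Bmᵀ *ᵥ v = A *ᵥ y := by
    rw [hvy, mulVec_mulVec, ← hABm]
  have hKv : v ⬝ᵥ ((Bm * Bmᵀ) *ᵥ v) = (A *ᵥ y) ⬝ᵥ (A *ᵥ y) := by
    rw [← mulVec_mulVec, hBT, hAy]
  have hvv : v ⬝ᵥ v = (A *ᵥ y) ⬝ᵥ y := by
    calc v ⬝ᵥ v = v ⬝ᵥ (Bm *ᵥ y) := by rw [← hvy]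
    _ = (Bmᵀ *ᵥ v) ⬝ᵥ y := hBT v y
    _ = (A *ᵥ y) ⬝ᵥ y := by rw [hAy]
  have hvpos : 0 < v ⬝ᵥ v := by
    have hnn : 0 ≤ v ⬝ᵥ v := by
      rw [dotProduct]
      exact Finset.sum_nonneg fun i _ => mul_self_nonneg _
    refine lt_of_le_of_ne hnn (Ne.symm fun h => hv (dotProduct_self_eq_zero.mp h))
  -- spectral gap for A
  have hL2 : ((-μ) • A + (1 : ℝ) • (A * A)).PosSemidef := by
    apply aux_psd hAherm
    intro j
    have h0 : 0 ≤ hAherm.eigenvalues j := hApsd.eigenvalues_nonneg j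
    by_cases hz : hAherm.eigenvalues j = 0
    · simp [hz]
    · have hvne : (⇑(hAherm.eigenvectorBasis j) : ((i : Fin r) × Fin (q i)) → ℝ) ≠ 0 := by
        intro h
        exact hAherm.eigenvectorBasis.orthonormal.ne_zero j (by ext x; exact congrFun h x)
      have hge := heig (hAherm.eigenvalues j) _ hvne (hAherm.mulVec_eigenvectorBasis j) hz
      nlinarith
  have hstar : ∀ {κ : Type} [Fintype κ] (w : κ → ℝ), star w = w := by
    intro κ _ w; ext i; simp
  have hKv_ge : μ * (v ⬝ᵥ v) ≤ v ⬝ᵥ ((Bm * Bmᵀ) *ᵥ v) := by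
    have h := hL2.dotProduct_mulVec_nonneg y
    rw [hstar y] at h
    simp only [add_mulVec, smul_mulVec, one_smul, dotProduct_add,
      dotProduct_smul, smul_eq_mul, ← mulVec_mulVec] at h
    have hAA : y ⬝ᵥ (A *ᵥ (A *ᵥ y)) = (A *ᵥ y) ⬝ᵥ (A *ᵥ y) := by
      rw [dotProduct_mulVec (v := y) (A := A), ← mulVec_transpose, hAsym]
    have hyA : y ⬝ᵥ (A *ᵥ y) = (A *ᵥ y) ⬝ᵥ y := dotProduct_comm _ _
    rw [hAA, hyA] at h
    rw [hKv, hvv]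
    nlinarith
  have hEv_ge : (1 / T) * (v ⬝ᵥ ((Bm * Bmᵀ) *ᵥ v)) ≤ v ⬝ᵥ (E *ᵥ v) := by
    have h := hEK.dotProduct_mulVec_nonneg v
    rw [hstar v, sub_mulVec, dotProduct_sub, smul_mulVec,
      dotProduct_smul, smul_eq_mul] at h
    linarith
  have hEv : v ⬝ᵥ (E *ᵥ v) = c * (v ⬝ᵥ v) := by
    rw [hev, dotProduct_smul, smul_eq_mul]
  have hchain : (μ / T) * (v ⬝ᵥ v) ≤ c * (v ⬝ᵥ v) := by
    have h1 : (1 / T) * (μ * (v ⬝ᵥ v)) ≤ (1 / T) * (v ⬝ᵥ ((Bm * Bmᵀ) *ᵥ v)) :=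
      mul_le_mul_of_nonneg_left hKv_ge (by positivity)
    calc (μ / T) * (v ⬝ᵥ v) = (1 / T) * (μ * (v ⬝ᵥ v)) := by ring
    _ ≤ (1 / T) * (v ⬝ᵥ ((Bm * Bmᵀ) *ᵥ v)) := h1
    _ ≤ v ⬝ᵥ (E *ᵥ v) := hEv_ge
    _ = c * (v ⬝ᵥ v) := hEv
  exact le_of_mul_le_mul_right hchain hvpos
end

section
/- Let A and B be real symmetric positive semidefinite n×n matrices such that the null space of A is contained in the null space of B. Let a > 0 be such that every nonzero eigenvalue of A is at least a, and b > 0 be such that every nonzero eigenvalue of B is at least b. Then for every vector v ∈ ℝⁿ orthogonal to the null space of the product A B (equivalently, v in the range of (A B)ᵀ), one has ‖A B v‖₂ ≥ a·b·‖v‖₂; consequently the smallest nonzero singular value, and hence every nonzero eigenvalue, of A B is at least a·b: λ⁺_min(A B) ≥ λ⁺_min(A) λ⁺_min(B). -/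
/-!
In an orthonormal eigenbasis of a symmetric matrix `M` whose nonzero eigenvalues are at least
`m ≥ 0`, both `m ⟪x, M x⟫ ≤ ‖M x‖²` and, for `x ⊥ ker M`, `m ‖x‖² ≤ ⟪x, M x⟫` hold coordinate by
coordinate; together they give `m² ‖x‖² ≤ ‖M x‖²` on `(ker M)ᗮ`.
A vector `v = (A B)ᵀ w = B A w` lies in the range of `B`, hence `v ⊥ ker B`, and
`B v ⊥ ker B ⊇ ker A`; applying the bound to `B` and then to `A` gives `‖A B v‖ ≥ a b ‖v‖`.
For an eigenpair `A B v = c v` with `c ≠ 0`, put `w = B v ⊥ ker A`; then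
`a b ⟪v, w⟫ ≤ a ‖w‖² ≤ ⟪w, A w⟫ = c ⟪v, w⟫`, and `⟪v, w⟫ > 0` since `B ⪰ 0` and `w ≠ 0`.
-/

open Matrix

noncomputable def euclNorm {n : ℕ} (v : Fin n → ℝ) : ℝ :=
  Real.sqrt (∑ i, v i ^ 2)

namespace Matrix

variable {ι : Type*} [Fintype ι]

def NonzeroEigenvaluesGE (M : Matrix ι ι ℝ) (m : ℝ) : Prop :=
  ∀ (c : ℝ) (v : ι → ℝ), v ≠ 0 → M *ᵥ v = c • v → c ≠ 0 → m ≤ c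

namespace IsHermitian

variable {M : Matrix ι ι ℝ}

theorem mulVec_dotProduct_eq_dotProduct_mulVec (hM : M.IsHermitian) (x y : ι → ℝ) :
    M *ᵥ x ⬝ᵥ y = x ⬝ᵥ M *ᵥ y := by
  rw [dotProduct_mulVec, ← mulVec_transpose, (isHermitian_iff_isSymm.mp hM).eq]

theorem mulVec_dotProduct_eq_zero (hM : M.IsHermitian) {y : ι → ℝ} (hy : M *ᵥ y = 0)
    (x : ι → ℝ) : M *ᵥ x ⬝ᵥ y = 0 := by
  rw [hM.mulVec_dotProduct_eq_dotProduct_mulVec, hy, dotProduct_zero]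

variable [DecidableEq ι]

theorem dotProduct_eq_sum_eigenvectorBasis (hM : M.IsHermitian) (x y : ι → ℝ) :
    x ⬝ᵥ y = ∑ i, (⇑(hM.eigenvectorBasis i) ⬝ᵥ x) * (⇑(hM.eigenvectorBasis i) ⬝ᵥ y) := by
  have := hM.eigenvectorBasis.sum_inner_mul_inner (WithLp.toLp 2 x) (WithLp.toLp 2 y)
  simp only [EuclideanSpace.inner_eq_star_dotProduct, star_trivial] at this
  rw [dotProduct_comm, ← this]
  simp only [dotProduct_comm y]

theorem eigenvectorBasis_dotProduct_mulVec (hM : M.IsHermitian) (i : ι) (x : ι → ℝ) :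
    ⇑(hM.eigenvectorBasis i) ⬝ᵥ M *ᵥ x = hM.eigenvalues i * (⇑(hM.eigenvectorBasis i) ⬝ᵥ x) := by
  rw [← hM.mulVec_dotProduct_eq_dotProduct_mulVec, hM.mulVec_eigenvectorBasis, smul_dotProduct,
    smul_eq_mul]

theorem eigenvalues_eq_zero_or_le {m : ℝ} (hM : M.IsHermitian) (heig : M.NonzeroEigenvaluesGE m)
    (i : ι) : hM.eigenvalues i = 0 ∨ m ≤ hM.eigenvalues i :=
  (eq_or_ne _ 0).imp_right <|
    heig _ _ (hM.eigenvectorBasis.orthonormal.ne_zero i ∘ fun h => by simpa using h)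
      (hM.mulVec_eigenvectorBasis i)

theorem mul_dotProduct_mulVec_le_dotProduct_mulVec_mulVec {m : ℝ} (hM : M.IsHermitian)
    (hm : 0 ≤ m) (heig : M.NonzeroEigenvaluesGE m) (x : ι → ℝ) :
    m * (x ⬝ᵥ M *ᵥ x) ≤ M *ᵥ x ⬝ᵥ M *ᵥ x := by
  rw [hM.dotProduct_eq_sum_eigenvectorBasis x, hM.dotProduct_eq_sum_eigenvectorBasis (M *ᵥ x),
    Finset.mul_sum]
  refine Finset.sum_le_sum fun i _ => ?_
  simp only [hM.eigenvectorBasis_dotProduct_mulVec]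
  rcases hM.eigenvalues_eq_zero_or_le heig i with h | h
  · simp [h]
  · have := mul_nonneg (mul_nonneg (hm.trans h) (sub_nonneg.mpr h))
      (mul_self_nonneg (⇑(hM.eigenvectorBasis i) ⬝ᵥ x))
    linarith

theorem mul_dotProduct_self_le_dotProduct_mulVec {m : ℝ} (hM : M.IsHermitian)
    (heig : M.NonzeroEigenvaluesGE m) {x : ι → ℝ} (hx : ∀ y, M *ᵥ y = 0 → x ⬝ᵥ y = 0) :
    m * (x ⬝ᵥ x) ≤ x ⬝ᵥ M *ᵥ x := by
  rw [hM.dotProduct_eq_sum_eigenvectorBasis x x, hM.dotProduct_eq_sum_eigenvectorBasis x (M *ᵥ x),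
    Finset.mul_sum]
  refine Finset.sum_le_sum fun i _ => ?_
  rw [hM.eigenvectorBasis_dotProduct_mulVec]
  rcases hM.eigenvalues_eq_zero_or_le heig i with h | h
  · have hker : M *ᵥ ⇑(hM.eigenvectorBasis i) = 0 := by
      rw [hM.mulVec_eigenvectorBasis, h, zero_smul]
    simp [dotProduct_comm _ x, hx _ hker]
  · nlinarith [mul_self_nonneg (⇑(hM.eigenvectorBasis i) ⬝ᵥ x)]

theorem sq_mul_dotProduct_self_le_dotProduct_mulVec_mulVec {m : ℝ} (hM : M.IsHermitian)
    (hm : 0 ≤ m) (heig : M.NonzeroEigenvaluesGE m) {x : ι → ℝ}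
    (hx : ∀ y, M *ᵥ y = 0 → x ⬝ᵥ y = 0) :
    m ^ 2 * (x ⬝ᵥ x) ≤ M *ᵥ x ⬝ᵥ M *ᵥ x :=
  calc m ^ 2 * (x ⬝ᵥ x) = m * (m * (x ⬝ᵥ x)) := by ring
    _ ≤ m * (x ⬝ᵥ M *ᵥ x) :=
      mul_le_mul_of_nonneg_left (hM.mul_dotProduct_self_le_dotProduct_mulVec heig hx) hm
    _ ≤ M *ᵥ x ⬝ᵥ M *ᵥ x := hM.mul_dotProduct_mulVec_le_dotProduct_mulVec_mulVec hm heig x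

end IsHermitian

variable [DecidableEq ι] {A B : Matrix ι ι ℝ} {a b : ℝ}

theorem sq_mul_dotProduct_self_le_of_mem_range_transpose_mul (hA : A.IsHermitian)
    (hB : B.IsHermitian) (hnull : ∀ v, A *ᵥ v = 0 → B *ᵥ v = 0) (ha : 0 ≤ a) (hb : 0 ≤ b)
    (haeig : A.NonzeroEigenvaluesGE a) (hbeig : B.NonzeroEigenvaluesGE b) {v : ι → ℝ}
    (hv : ∃ w, (A * B)ᵀ *ᵥ w = v) :
    (a * b) ^ 2 * (v ⬝ᵥ v) ≤ (A * B) *ᵥ v ⬝ᵥ (A * B) *ᵥ v := by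
  obtain ⟨w, hw⟩ := hv
  have hv_range : B *ᵥ (A *ᵥ w) = v := by
    rw [← hw, transpose_mul, (isHermitian_iff_isSymm.mp hA).eq,
      (isHermitian_iff_isSymm.mp hB).eq, mulVec_mulVec]
  have hv_perp : ∀ y, B *ᵥ y = 0 → v ⬝ᵥ y = 0 := fun y hy =>
    hv_range ▸ hB.mulVec_dotProduct_eq_zero hy _
  have hBv_perp : ∀ y, A *ᵥ y = 0 → B *ᵥ v ⬝ᵥ y = 0 := fun y hy =>
    hB.mulVec_dotProduct_eq_zero (hnull y hy) _
  calc (a * b) ^ 2 * (v ⬝ᵥ v) = a ^ 2 * (b ^ 2 * (v ⬝ᵥ v)) := by ring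
    _ ≤ a ^ 2 * (B *ᵥ v ⬝ᵥ B *ᵥ v) := by
      gcongr
      exact hB.sq_mul_dotProduct_self_le_dotProduct_mulVec_mulVec hb hbeig hv_perp
    _ ≤ A *ᵥ (B *ᵥ v) ⬝ᵥ A *ᵥ (B *ᵥ v) :=
      hA.sq_mul_dotProduct_self_le_dotProduct_mulVec_mulVec ha haeig hBv_perp
    _ = (A * B) *ᵥ v ⬝ᵥ (A * B) *ᵥ v := by rw [mulVec_mulVec]

theorem mul_le_of_mul_mulVec_eq_smul (hA : A.IsHermitian) (hB : B.PosSemidef)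
    (hnull : ∀ v, A *ᵥ v = 0 → B *ᵥ v = 0) (ha : 0 ≤ a) (hb : 0 ≤ b)
    (haeig : A.NonzeroEigenvaluesGE a) (hbeig : B.NonzeroEigenvaluesGE b) {c : ℝ} {v : ι → ℝ}
    (hv : v ≠ 0) (hABv : (A * B) *ᵥ v = c • v) (hc : c ≠ 0) : a * b ≤ c := by
  set w := B *ᵥ v
  have hAw : A *ᵥ w = c • v := by rw [mulVec_mulVec, hABv]
  have hw_perp : ∀ y, A *ᵥ y = 0 → w ⬝ᵥ y = 0 := fun y hy =>
    hB.isHermitian.mulVec_dotProduct_eq_zero (hnull y hy) _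
  have hw : w ≠ 0 := fun hw => hv <| (smul_eq_zero.mp (hAw ▸ hw ▸ mulVec_zero A)).resolve_left hc
  have hvw : 0 < v ⬝ᵥ w := by
    have hvw_nonneg : 0 ≤ v ⬝ᵥ w := by simpa using hB.dotProduct_mulVec_nonneg v
    refine hvw_nonneg.lt_of_ne fun hvw => hw ?_
    simpa using (hB.dotProduct_mulVec_zero_iff v).mp (by simpa using hvw.symm)
  refine le_of_mul_le_mul_right ?_ hvw
  calc a * b * (v ⬝ᵥ w) = a * (b * (v ⬝ᵥ w)) := by ring
    _ ≤ a * (w ⬝ᵥ w) := by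
      gcongr
      exact hB.isHermitian.mul_dotProduct_mulVec_le_dotProduct_mulVec_mulVec hb hbeig v
    _ ≤ w ⬝ᵥ A *ᵥ w := hA.mul_dotProduct_self_le_dotProduct_mulVec haeig hw_perp
    _ = c * (v ⬝ᵥ w) := by rw [hAw, dotProduct_smul, smul_eq_mul, dotProduct_comm]

end Matrix

theorem euclNorm_eq_sqrt_dotProduct {n : ℕ} (v : Fin n → ℝ) : euclNorm v = √(v ⬝ᵥ v) := by
  simp only [euclNorm, dotProduct, sq]

theorem mul_euclNorm_le_euclNorm {n : ℕ} {c : ℝ} {v w : Fin n → ℝ} (hc : 0 ≤ c)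
    (h : c ^ 2 * (v ⬝ᵥ v) ≤ w ⬝ᵥ w) : c * euclNorm v ≤ euclNorm w := by
  rw [euclNorm_eq_sqrt_dotProduct, euclNorm_eq_sqrt_dotProduct, ← Real.sqrt_sq hc,
    ← Real.sqrt_mul (sq_nonneg c)]
  exact Real.sqrt_le_sqrt h

/-- Smallest nonzero eigenvalue of a product of positive semidefinite matrices:
if `Null(A) ⊆ Null(B)`, `a` lower-bounds the nonzero eigenvalues of `A` and `b`
those of `B`, then `‖A B v‖ ≥ a b ‖v‖` for every `v` in the range of `(A B)ᵀ`,
and every nonzero eigenvalue of `A B` is at least `a b`. -/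
theorem smallest_nonzero_eigenvalue_product (n : ℕ)
    (A B : Matrix (Fin n) (Fin n) ℝ)
    (hA : A.PosSemidef) (hB : B.PosSemidef)
    (hnull : ∀ v : Fin n → ℝ, A.mulVec v = 0 → B.mulVec v = 0)
    (a b : ℝ) (ha : 0 < a) (hb : 0 < b)
    (haeig : ∀ (c : ℝ) (v : Fin n → ℝ), v ≠ 0 → A.mulVec v = c • v → c ≠ 0 → a ≤ c)
    (hbeig : ∀ (c : ℝ) (v : Fin n → ℝ), v ≠ 0 → B.mulVec v = c • v → c ≠ 0 → b ≤ c) :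
    (∀ v : Fin n → ℝ, (∃ w : Fin n → ℝ, ((A * B)ᵀ).mulVec w = v) →
      a * b * euclNorm v ≤ euclNorm ((A * B).mulVec v)) ∧
    (∀ (c : ℝ) (v : Fin n → ℝ), v ≠ 0 → (A * B).mulVec v = c • v → c ≠ 0 →
      a * b ≤ c) :=
  ⟨fun _ hv => mul_euclNorm_le_euclNorm (by positivity)
      (sq_mul_dotProduct_self_le_of_mem_range_transpose_mul hA.isHermitian hB.isHermitian hnull
        ha.le hb.le haeig hbeig hv),
    fun _ _ hv hABv hc =>
      mul_le_of_mul_mulVec_eq_smul hA.isHermitian hB hnull ha.le hb.le haeig hbeig hv hABv hc⟩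
end
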